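/- arXiv:2603.25013 — 12 statements merged into one kernel-verified Lean document; each statement's English description precedes it below -/
import Mathlib

section
/- Let R be a domain, n ≥ 1, and let B = R[x₁^{±1},…,xₙ^{±1}] be the Laurent polynomial ring in n variables over R. Let M be a submonoid of ℤⁿ and let R[M] be the R-subalgebra of B generated by the monomials x^a with a ∈ M. Then R[M] is quasi-factorially closed in B if and only if the subgroup ⟨M⟩ of ℤⁿ generated by M is a direct summand of ℤⁿ (equivalently, ℤⁿ/⟨M⟩ is torsion-free). -/
/-- An `R`-subalgebra `A` of `B` is quasi-factorially closed (qfc) in `B` if for all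
nonzero `a, b ∈ B` with `a * b ∈ A` there are units `u, v` of `B` with `u*a ∈ A`, `v*b ∈ A`. -/
def IsQfc {R B : Type*} [CommSemiring R] [CommRing B] [Algebra R B] (A : Subalgebra R B) : Prop :=
  ∀ a b : B, a ≠ 0 → b ≠ 0 → a * b ∈ A →
    ∃ u v : Bˣ, (u : B) * a ∈ A ∧ (v : B) * b ∈ A

/-- For a submonoid `M ⊆ ℤⁿ`, the `R`-subalgebra `R[M]` of the Laurent polynomial ring
`B = R[x₁^{±1},…,xₙ^{±1}]` generated by the monomials `x^a`, `a ∈ M`. -/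
noncomputable def monomialSubalgebra (R : Type*) [CommRing R] {n : ℕ}
    (M : AddSubmonoid (Fin n → ℤ)) : Subalgebra R (AddMonoidAlgebra R (Fin n → ℤ)) :=
  Algebra.adjoin R (AddMonoidAlgebra.of' R (Fin n → ℤ) '' (M : Set (Fin n → ℤ)))

/-!
Everything rests on a homogeneity property of `R[G]` for a domain `R`: if `φ : G →+ Γ` is a
homomorphism to a linearly ordered group and `φ` vanishes on the support of `f * g`, then `φ` is
constant on the support of `f`. Indeed the `φ`-leading parts of `f` and `g` multiply to a nonzero
element, which is the `φ`-leading part of `f * g`; so the maximal `φ`-degrees add up to `0`, and so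
do the minimal ones. Taking for `φ` the coordinates of `ℤⁿ` shows that units of `R[ℤⁿ]` are
monomials.

If `⟨M⟩` has a complement, apply this to the projection with kernel `⟨M⟩`: the support of a factor
of an element of `R[M]` lies in one coset of `⟨M⟩`, and multiplying by a suitable monomial moves it
into `M`. Conversely, if `k • c ∈ ⟨M⟩` with `k ≠ 0`, write `k • c = m₁ - m₀` with `mᵢ ∈ M`; then
`x^m₀ (1 + x^c)` divides `x^m₀ - (-1)^k x^m₁ ∈ R[M]`, and as units are monomials, quasi-factorial
closedness puts both `m₀ + d` and `m₀ + c + d` in `M` for some `d`, so `c ∈ ⟨M⟩`. Hence `ℤⁿ/⟨M⟩`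
is torsion-free, so free, and the quotient map splits.
-/

open AddMonoidAlgebra

namespace AddMonoidAlgebra

lemma support_coeff_nonempty {R G : Type*} [Semiring R] {f : R[G]} (hf : f ≠ 0) :
    f.coeff.support.Nonempty :=
  Finsupp.support_nonempty_iff.2 (coeff_eq_zero.not.2 hf)

lemma coe_support_coeff_single_subset {R G : Type*} [Semiring R] {S : Set G} {m : G}
    (hm : m ∈ S) (r : R) : ↑(single m r).coeff.support ⊆ S := by
  classical
  intro x hx
  rw [Finset.mem_coe, coeff_single] at hx
  rw [Finset.mem_singleton.1 (Finsupp.support_single_subset hx)]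
  exact hm

section Homogeneity

variable {R G Γ : Type*} [Semiring R] [AddMonoid G] [AddCommGroup Γ] [LinearOrder Γ]
  [IsOrderedAddMonoid Γ]

lemma coeff_mul_eq_coeff_filter_mul_filter (φ : G →+ Γ) {f g : R[G]} {a b : Γ}
    (hf : ∀ x ∈ f.coeff.support, φ x ≤ a) (hg : ∀ y ∈ g.coeff.support, φ y ≤ b)
    {z : G} (hz : φ z = a + b) :
    (f * g).coeff z =
      (ofCoeff (f.coeff.filter (φ · = a)) * ofCoeff (g.coeff.filter (φ · = b))).coeff z := by
  classical
  simp only [coeff_mul]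
  conv_rhs => rw [Finsupp.sum_of_support_subset _ (Finset.filter_subset _ _) _ (by simp)]
  refine Finset.sum_congr rfl fun x hx => ?_
  conv_rhs => rw [Finsupp.sum_of_support_subset _ (Finset.filter_subset _ _) _ (by simp)]
  refine Finset.sum_congr rfl fun y hy => ?_
  dsimp only
  split_ifs with hxy
  · have hsum : φ x + φ y = a + b := by rw [← map_add, hxy, hz]
    have hxa : φ x = a := (hf x hx).eq_of_not_lt fun h =>
      (add_lt_add_of_lt_of_le h (hg y hy)).ne hsum
    have hyb : φ y = b := (hg y hy).eq_of_not_lt fun h =>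
      (add_lt_add_of_le_of_lt (hf x hx) h).ne hsum
    rw [Finsupp.filter_apply_pos (φ · = a) _ hxa, Finsupp.filter_apply_pos (φ · = b) _ hyb]
  · rfl

variable [NoZeroDivisors R] [UniqueSums G]

lemma exists_mem_support_mul_map_eq_add (φ : G →+ Γ) {f g : R[G]} {xf xg : G}
    (hxf : xf ∈ f.coeff.support) (hf : ∀ x ∈ f.coeff.support, φ x ≤ φ xf)
    (hxg : xg ∈ g.coeff.support) (hg : ∀ y ∈ g.coeff.support, φ y ≤ φ xg) :
    ∃ z ∈ (f * g).coeff.support, φ z = φ xf + φ xg := by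
  classical
  set ft : R[G] := ofCoeff (f.coeff.filter (φ · = φ xf))
  set gt : R[G] := ofCoeff (g.coeff.filter (φ · = φ xg))
  have hft : ft ≠ 0 := fun h => Finsupp.mem_support_iff.1 hxf <| by
    simpa [ft, Finsupp.filter_apply_pos] using congr(($h).coeff xf)
  have hgt : gt ≠ 0 := fun h => Finsupp.mem_support_iff.1 hxg <| by
    simpa [gt, Finsupp.filter_apply_pos] using congr(($h).coeff xg)
  obtain ⟨z, hz⟩ := support_coeff_nonempty (mul_ne_zero hft hgt)
  obtain ⟨x, hx, y, hy, rfl⟩ := Finset.mem_add.1 (support_coeff_mul_subset ft gt hz)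
  have hφ : φ (x + y) = φ xf + φ xg := by
    rw [map_add, (Finset.mem_filter.1 hx).2, (Finset.mem_filter.1 hy).2]
  refine ⟨x + y, ?_, hφ⟩
  rw [Finsupp.mem_support_iff, coeff_mul_eq_coeff_filter_mul_filter φ hf hg hφ]
  exact Finsupp.mem_support_iff.1 hz

lemma map_eq_of_forall_mem_support_mul (φ : G →+ Γ) {f g : R[G]} (hf : f ≠ 0) (hg : g ≠ 0)
    (hfg : ∀ z ∈ (f * g).coeff.support, φ z = 0) :
    ∀ x ∈ f.coeff.support, ∀ y ∈ f.coeff.support, φ x = φ y := by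
  obtain ⟨fmax, hfmax, hfmax_le⟩ := f.coeff.support.exists_max_image φ (support_coeff_nonempty hf)
  obtain ⟨fmin, hfmin, hle_fmin⟩ := f.coeff.support.exists_min_image φ (support_coeff_nonempty hf)
  obtain ⟨gmax, hgmax, hgmax_le⟩ := g.coeff.support.exists_max_image φ (support_coeff_nonempty hg)
  obtain ⟨gmin, hgmin, hle_gmin⟩ := g.coeff.support.exists_min_image φ (support_coeff_nonempty hg)
  obtain ⟨z, hz, hφz⟩ := exists_mem_support_mul_map_eq_add φ hfmax hfmax_le hgmax hgmax_le
  obtain ⟨z', hz', hφz'⟩ := exists_mem_support_mul_map_eq_add (-φ) hfmin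
    (fun x hx => neg_le_neg (hle_fmin x hx)) hgmin (fun y hy => neg_le_neg (hle_gmin y hy))
  have htop : φ fmax + φ gmax = 0 := hφz ▸ hfg z hz
  have hbot : φ fmin + φ gmin = 0 := by
    simp only [AddMonoidHom.neg_apply, hfg z' hz', neg_zero, ← neg_add] at hφz'
    exact neg_eq_zero.1 hφz'.symm
  have hmax_le_min : φ fmax ≤ φ fmin := by
    rw [eq_neg_of_add_eq_zero_left htop, eq_neg_of_add_eq_zero_left hbot]
    exact neg_le_neg (hle_gmin gmax hgmax)
  have hconst : ∀ x ∈ f.coeff.support, φ x = φ fmax := fun x hx =>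
    le_antisymm (hfmax_le x hx) (hmax_le_min.trans (hle_fmin x hx))
  intro x hx y hy
  rw [hconst x hx, hconst y hy]

end Homogeneity

lemma pi_map_eq_of_forall_mem_support_mul {R G ι Γ : Type*} [Semiring R] [NoZeroDivisors R]
    [AddMonoid G] [UniqueSums G] [AddCommGroup Γ] [LinearOrder Γ] [IsOrderedAddMonoid Γ]
    (φ : G →+ (ι → Γ)) {f g : R[G]} (hf : f ≠ 0) (hg : g ≠ 0)
    (hfg : ∀ z ∈ (f * g).coeff.support, φ z = 0) :
    ∀ x ∈ f.coeff.support, ∀ y ∈ f.coeff.support, φ x = φ y := by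
  intro x hx y hy
  funext i
  refine map_eq_of_forall_mem_support_mul ((Pi.evalAddMonoidHom _ i).comp φ) hf hg
    (fun z hz => ?_) x hx y hy
  simp [hfg z hz]

lemma exists_eq_single_of_isUnit {R ι : Type*} [Semiring R] [IsDomain R] {f : R[ι → ℤ]}
    (hf : IsUnit f) : ∃ d r, f = single d r := by
  obtain ⟨g, hfg⟩ := hf.exists_right_inv
  obtain ⟨d, hd⟩ := support_coeff_nonempty hf.ne_zero
  have hone (z : ι → ℤ) (hz : z ∈ (f * g).coeff.support) : AddMonoidHom.id _ z = 0 := by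
    rw [hfg] at hz
    simpa using support_coeff_one_subset hz
  have hsupp : f.coeff.support ⊆ {d} := fun x hx => Finset.mem_singleton.2 <|
    pi_map_eq_of_forall_mem_support_mul (AddMonoidHom.id _) hf.ne_zero
      (right_ne_zero_of_mul_eq_one hfg) hone x hx d hd
  exact ⟨d, f.coeff d, coeff_injective (by simpa using Finsupp.support_subset_singleton.1 hsupp)⟩

end AddMonoidAlgebra

namespace AddSubmonoid

variable {G : Type*} [AddCommGroup G] (M : AddSubmonoid G)

lemma exists_eq_sub_of_mem_closure {x : G} (hx : x ∈ AddSubgroup.closure (M : Set G)) :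
    ∃ m₁ ∈ M, ∃ m₂ ∈ M, x = m₁ - m₂ := by
  induction hx using AddSubgroup.closure_induction with
  | mem x hx => exact ⟨x, hx, 0, M.zero_mem, (sub_zero x).symm⟩
  | zero => exact ⟨0, M.zero_mem, 0, M.zero_mem, (sub_zero 0).symm⟩
  | add x y _ _ ihx ihy =>
    obtain ⟨a, ha, b, hb, rfl⟩ := ihx
    obtain ⟨c, hc, d, hd, rfl⟩ := ihy
    exact ⟨a + c, M.add_mem ha hc, b + d, M.add_mem hb hd, by abel⟩
  | neg x _ ihx =>
    obtain ⟨a, ha, b, hb, rfl⟩ := ihx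
    exact ⟨b, hb, a, ha, neg_sub a b⟩

lemma exists_forall_add_mem_of_subset_closure (S : Finset G)
    (hS : ↑S ⊆ (AddSubgroup.closure (M : Set G) : Set G)) :
    ∃ m ∈ M, ∀ s ∈ S, s + m ∈ M := by
  classical
  induction S using Finset.induction_on with
  | empty => exact ⟨0, M.zero_mem, by simp⟩
  | insert a S _ ih =>
    rw [Finset.coe_insert, Set.insert_subset_iff] at hS
    obtain ⟨m, hm, hmS⟩ := ih hS.2
    obtain ⟨m₁, hm₁, m₂, hm₂, rfl⟩ := M.exists_eq_sub_of_mem_closure hS.1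
    refine ⟨m + m₂, M.add_mem hm hm₂, Finset.forall_mem_insert _ _ _ |>.2 ⟨?_, fun s hs => ?_⟩⟩
    · rw [show m₁ - m₂ + (m + m₂) = m₁ + m by abel]
      exact M.add_mem hm₁ hm
    · rw [← add_assoc]
      exact M.add_mem (hmS s hs) hm₂

end AddSubmonoid

lemma Submodule.exists_isCompl_of_projective_quotient {R M : Type*} [Ring R] [AddCommGroup M]
    [Module R M] (p : Submodule R M) [Module.Projective R (M ⧸ p)] : ∃ q, IsCompl p q := by
  obtain ⟨s, hs⟩ := Module.projective_lifting_property p.mkQ LinearMap.id p.mkQ_surjective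
  have hs' (y : M ⧸ p) : p.mkQ (s y) = y := LinearMap.congr_fun hs y
  refine ⟨LinearMap.range s, disjoint_def.2 ?_, codisjoint_iff.2 (eq_top_iff.2 fun x _ => ?_)⟩
  · rintro _ hx ⟨y, rfl⟩
    obtain rfl : y = 0 := hs' y ▸ (Quotient.mk_eq_zero p).2 hx
    exact map_zero s
  · refine mem_sup.2 ⟨x - s (p.mkQ x), ?_, s (p.mkQ x), ⟨_, rfl⟩, sub_add_cancel _ _⟩
    exact (Quotient.mk_eq_zero p).1 (by rw [← mkQ_apply, map_sub, hs', sub_self])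

lemma AddSubgroup.isTorsionFree_int_quotient {G : Type*} [AddCommGroup G] (H : AddSubgroup G)
    (hH : ∀ k : ℕ, k ≠ 0 → ∀ c : G, k • c ∈ H → c ∈ H) :
    Module.IsTorsionFree ℤ (G ⧸ H.toIntSubmodule) := by
  refine .of_smul_eq_zero fun r x hrx => or_iff_not_imp_left.2 fun hr => ?_
  obtain ⟨c, rfl⟩ := H.toIntSubmodule.mkQ_surjective x
  have hc : r.natAbs • c ∈ H.toIntSubmodule := by
    rw [← Submodule.Quotient.mk_eq_zero, ← Submodule.mkQ_apply, map_nsmul, natAbs_nsmul_eq_zero]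
    exact hrx
  exact (Submodule.Quotient.mk_eq_zero _).2 (hH _ (Int.natAbs_ne_zero.2 hr) c hc)

section MonomialSubalgebra

variable {R : Type*} [CommRing R] {n : ℕ} {M : AddSubmonoid (Fin n → ℤ)}

lemma mem_monomialSubalgebra_iff {f : R[Fin n → ℤ]} :
    f ∈ monomialSubalgebra R M ↔ ↑f.coeff.support ⊆ (M : Set (Fin n → ℤ)) := by
  classical
  refine ⟨fun hf => ?_, fun hf => Algebra.adjoin_mono (Set.image_mono hf) (mem_adjoin_support f)⟩
  induction hf using Algebra.adjoin_induction with
  | mem _ hx =>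
    obtain ⟨m, hm, rfl⟩ := hx
    exact coe_support_coeff_single_subset hm 1
  | algebraMap r =>
    rw [coe_algebraMap, Function.comp_apply]
    exact coe_support_coeff_single_subset M.zero_mem _
  | add f g _ _ hf hg =>
    exact (Finset.coe_subset.2 Finsupp.support_add).trans (by simpa using And.intro hf hg)
  | mul f g _ _ hf hg =>
    intro z hz
    obtain ⟨x, hx, y, hy, rfl⟩ := Finset.mem_add.1 (support_coeff_mul_subset f g hz)
    exact M.add_mem (hf hx) (hg hy)

lemma single_mem_monomialSubalgebra {m : Fin n → ℤ} (hm : m ∈ M) (r : R) :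
    single m r ∈ monomialSubalgebra R M :=
  mem_monomialSubalgebra_iff.2 (coe_support_coeff_single_subset hm r)

lemma exists_unit_mul_mem_monomialSubalgebra {a : R[Fin n → ℤ]} (x₀ : Fin n → ℤ)
    (h : ∀ x ∈ a.coeff.support, x - x₀ ∈ AddSubgroup.closure (M : Set (Fin n → ℤ))) :
    ∃ u : R[Fin n → ℤ]ˣ, ↑u * a ∈ monomialSubalgebra R M := by
  classical
  obtain ⟨m, -, hm⟩ := M.exists_forall_add_mem_of_subset_closure (a.coeff.support.image (· - x₀))
    (by simpa [Set.subset_def] using h)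
  refine ⟨Units.mkOfMulEqOne (single (m - x₀) (1 : R)) (single (x₀ - m) 1) (by simp [one_def]), ?_⟩
  rw [Units.val_mkOfMulEqOne, mem_monomialSubalgebra_iff]
  intro z hz
  obtain ⟨x, hx, rfl⟩ := Finset.mem_image.1 (support_coeff_single_mul_subset a 1 (m - x₀) hz)
  rw [show m - x₀ + x = x - x₀ + m by abel]
  exact hm _ (Finset.mem_image_of_mem _ hx)

variable [IsDomain R]

lemma exists_unit_mul_mem_monomialSubalgebra_of_isCompl {N : AddSubgroup (Fin n → ℤ)}
    (hN : IsCompl (AddSubgroup.closure (M : Set (Fin n → ℤ))) N) {a b : R[Fin n → ℤ]}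
    (ha : a ≠ 0) (hb : b ≠ 0) (hab : a * b ∈ monomialSubalgebra R M) :
    ∃ u : R[Fin n → ℤ]ˣ, ↑u * a ∈ monomialSubalgebra R M := by
  have hpq := AddSubgroup.toIntSubmodule.isCompl_iff.1 hN
  let π := (Submodule.projection _ _ hpq.symm).toAddMonoidHom
  have hπ (x : Fin n → ℤ) : π x = 0 ↔ x ∈ AddSubgroup.closure (M : Set (Fin n → ℤ)) :=
    Submodule.projection_apply_eq_zero_iff hpq.symm
  obtain ⟨x₀, hx₀⟩ := support_coeff_nonempty ha
  refine exists_unit_mul_mem_monomialSubalgebra x₀ fun x hx => (hπ _).1 ?_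
  rw [map_sub, sub_eq_zero]
  exact pi_map_eq_of_forall_mem_support_mul π ha hb
    (fun z hz => (hπ z).2 (AddSubgroup.subset_closure (mem_monomialSubalgebra_iff.1 hab hz)))
    x hx x₀ hx₀

lemma IsQfc.sub_mem_closure_of_mem_support (hq : IsQfc (monomialSubalgebra R M))
    {a b : R[Fin n → ℤ]} (ha : a ≠ 0) (hb : b ≠ 0) (hab : a * b ∈ monomialSubalgebra R M)
    {x y : Fin n → ℤ} (hx : x ∈ a.coeff.support) (hy : y ∈ a.coeff.support) :
    x - y ∈ AddSubgroup.closure (M : Set (Fin n → ℤ)) := by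
  obtain ⟨u, -, hu, -⟩ := hq a b ha hb hab
  obtain ⟨d, r, hur⟩ := exists_eq_single_of_isUnit u.isUnit
  have hr : r ≠ 0 := by
    rintro rfl
    exact u.ne_zero (hur.trans (single_zero d))
  have hshift : ∀ x ∈ a.coeff.support, d + x ∈ M := fun x hx =>
    mem_monomialSubalgebra_iff.1 hu <| by
      rw [Finset.mem_coe, Finsupp.mem_support_iff, hur, coeff_single_mul_add]
      exact mul_ne_zero hr (Finsupp.mem_support_iff.1 hx)
  simpa using sub_mem (AddSubgroup.subset_closure (hshift x hx))
    (AddSubgroup.subset_closure (hshift y hy))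

lemma IsQfc.mem_closure_of_nsmul_mem (hq : IsQfc (monomialSubalgebra R M)) {k : ℕ} (hk : k ≠ 0)
    {c : Fin n → ℤ} (hkc : k • c ∈ AddSubgroup.closure (M : Set (Fin n → ℤ))) :
    c ∈ AddSubgroup.closure (M : Set (Fin n → ℤ)) := by
  rcases eq_or_ne c 0 with rfl | hc
  · exact zero_mem _
  obtain ⟨m₁, hm₁, m₀, hm₀, hkc⟩ := M.exists_eq_sub_of_mem_closure hkc
  set t : R[Fin n → ℤ] := single c 1
  have hprod : (single m₀ 1 + single (m₀ + c) 1) * ∑ i ∈ Finset.range k, (-t) ^ i =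
      single m₀ 1 - single m₁ ((-1) ^ k) := by
    have ha : single m₀ (1 : R) + single (m₀ + c) 1 = single m₀ 1 * (1 - -t) := by
      simp [t, mul_add, single_mul_single]
    rw [ha, mul_assoc, mul_neg_geom_sum, mul_sub, mul_one, ← single_neg, single_pow,
      single_mul_single, one_mul, hkc, add_sub_cancel]
  have hm₀m₁ : m₀ ≠ m₁ := fun h => smul_ne_zero hk hc (by rw [hkc, h, sub_self])
  have hne : (single m₀ 1 + single (m₀ + c) 1) * ∑ i ∈ Finset.range k, (-t) ^ i ≠ 0 := by
    rw [hprod]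
    intro h0
    simpa [Finsupp.single_apply, hm₀m₁] using congr(($h0).coeff m₀)
  have hmem := hprod ▸ sub_mem (single_mem_monomialSubalgebra hm₀ 1)
    (single_mem_monomialSubalgebra hm₁ ((-1) ^ k))
  have hc' : m₀ + c ≠ m₀ := by simpa using hc
  simpa using hq.sub_mem_closure_of_mem_support (left_ne_zero_of_mul hne)
    (right_ne_zero_of_mul hne) hmem (x := m₀ + c) (y := m₀) (by simp [hc']) (by simp [hc'.symm])

end MonomialSubalgebra

theorem monomialSubalgebra_isQfc_iff_directSummand_general
    (R : Type*) [CommRing R] [IsDomain R] (n : ℕ)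
    (M : AddSubmonoid (Fin n → ℤ)) :
    IsQfc (monomialSubalgebra R M) ↔
      ∃ N : AddSubgroup (Fin n → ℤ),
        IsCompl (AddSubgroup.closure (M : Set (Fin n → ℤ))) N := by
  constructor
  · intro hq
    have := (AddSubgroup.closure (M : Set (Fin n → ℤ))).isTorsionFree_int_quotient
      fun k hk c => hq.mem_closure_of_nsmul_mem hk
    obtain ⟨q, hcompl⟩ := Submodule.exists_isCompl_of_projective_quotient
      (AddSubgroup.closure (M : Set (Fin n → ℤ))).toIntSubmodule
    exact ⟨q.toAddSubgroup, AddSubgroup.toIntSubmodule.isCompl_iff.2 hcompl⟩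
  · rintro ⟨N, hN⟩ a b ha hb hab
    obtain ⟨u, hu⟩ := exists_unit_mul_mem_monomialSubalgebra_of_isCompl hN ha hb hab
    obtain ⟨v, hv⟩ :=
      exists_unit_mul_mem_monomialSubalgebra_of_isCompl hN hb ha (mul_comm a b ▸ hab)
    exact ⟨u, v, hu, hv⟩

/-- `R[M]` is qfc in `B = R[x₁^{±1},…,xₙ^{±1}]` iff the subgroup `⟨M⟩` generated by `M`
is a direct summand of `ℤⁿ`. -/
theorem monomialSubalgebra_isQfc_iff_directSummand
    (R : Type*) [CommRing R] [IsDomain R] (n : ℕ) (hn : 1 ≤ n)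
    (M : AddSubmonoid (Fin n → ℤ)) :
    IsQfc (monomialSubalgebra R M) ↔
      ∃ N : AddSubgroup (Fin n → ℤ),
        IsCompl (AddSubgroup.closure (M : Set (Fin n → ℤ))) N :=
  monomialSubalgebra_isQfc_iff_directSummand_general R n M
end

section
/- Let R be a domain, n ≥ 1, and let B = R[x₁^{±1},…,xₙ^{±1}] be the Laurent polynomial ring in n variables over R. Let M be a submonoid of ℤⁿ, ⟨M⟩ the subgroup of ℤⁿ generated by M, and Cone(⟨M⟩) the set of all finite nonnegative real combinations of elements of ⟨M⟩ in ℝⁿ (where ℤⁿ is embedded in ℝⁿ). Then R[M] is quasi-factorially closed in B if and only if Cone(⟨M⟩) ∩ ℤⁿ = ⟨M⟩. -/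
/-- The cone of a subset `D ⊆ ℤⁿ` in `ℝⁿ`: all finite nonnegative real combinations of
elements of `D` (where `ℤⁿ` is embedded in `ℝⁿ`). -/
def coneOf {n : ℕ} (D : Set (Fin n → ℤ)) : Set (Fin n → ℝ) :=
  {x | ∃ c : (Fin n → ℤ) →₀ ℝ, (↑c.support : Set (Fin n → ℤ)) ⊆ D ∧ (∀ a, 0 ≤ c a) ∧
      x = c.sum fun a t => t • fun i => ((a i : ℝ))}

/-!
Write `G = ⟨M⟩`. Since `G = -G`, an integer point lies in `Cone(G)` iff some positive multiple
lies in `G`, so the cone condition says that `ℤⁿ/G` is torsion-free. As `ℚ` is an injective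
`ℤ`-module, an element `z` that is not torsion modulo `G` is detected by an additive map
`φ : ℤⁿ → ℚ` vanishing on `G` with `φ z = 1`.

If `f, g ≠ 0` and `φ` vanishes on `supp (f g)`, then `φ` is constant on `supp f`: by a unique-sum
argument, the `φ`-maximal (and `φ`-minimal) parts of `f` and `g` contribute a monomial of `f g`
that does not cancel. Hence units of the Laurent ring are monomials, and when `ℤⁿ/G` is
torsion-free and `f g ∈ R[M]`, `supp f` lies in one coset of `G`, so a monomial moves `f` into
`R[M]`. Conversely, if `k a ∈ G` with `k > 0` and `a ∉ G`, then `x^a - 1` divides an element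
`x^p - x^q` of `R[M]`, while no monomial multiple of `x^a - 1` lies in `R[M]`.
-/

theorem AddSubgroup.exists_addMonoidHom_rat {A : Type*} [AddCommGroup A] {H : AddSubgroup A}
    {z : A} (hz : ∀ k : ℕ, k • z ∈ H → k = 0) :
    ∃ φ : A →+ ℚ, (∀ h ∈ H, φ h = 0) ∧ φ z = 1 := by
  let incl : ℤ →+ A ⧸ H := zmultiplesHom _ (z : A ⧸ H)
  have hincl : Function.Injective incl := by
    refine (injective_iff_map_eq_zero incl).mpr fun k hk ↦ Int.natAbs_eq_zero.mp (hz _ ?_)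
    rw [← QuotientAddGroup.eq_zero_iff, QuotientAddGroup.mk_nsmul, natAbs_nsmul_eq_zero]
    exact hk
  obtain ⟨ψ, hψ⟩ := (Module.Baer.of_divisible ℚ).extension_property_addMonoidHom incl hincl
    (Int.castAddHom ℚ)
  refine ⟨ψ.comp (QuotientAddGroup.mk' H), fun h hh ↦ ?_, ?_⟩
  · simp [(QuotientAddGroup.eq_zero_iff h).mpr hh]
  · simpa [incl] using DFunLike.congr_fun hψ 1

section AddSubmonoidClosure

variable {A : Type*} [AddCommGroup A] {M : AddSubmonoid A}

theorem AddSubgroup.exists_add_mem_of_mem_closure {g : A}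
    (hg : g ∈ AddSubgroup.closure (M : Set A)) : ∃ m ∈ M, g + m ∈ M := by
  induction hg using AddSubgroup.closure_induction with
  | mem g hg => exact ⟨0, M.zero_mem, by simpa⟩
  | zero => exact ⟨0, M.zero_mem, by simp⟩
  | add g h _ _ hg hh =>
    obtain ⟨m, hm, hgm⟩ := hg
    obtain ⟨m', hm', hhm'⟩ := hh
    exact ⟨m + m', M.add_mem hm hm', by simpa [add_add_add_comm] using M.add_mem hgm hhm'⟩
  | neg g _ hg =>
    obtain ⟨m, hm, hgm⟩ := hg
    exact ⟨g + m, hgm, by simpa⟩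

theorem AddSubgroup.exists_forall_add_mem_of_subset_closure (S : Finset A)
    (hS : ∀ g ∈ S, g ∈ AddSubgroup.closure (M : Set A)) : ∃ m ∈ M, ∀ g ∈ S, g + m ∈ M := by
  classical
  induction S using Finset.induction_on with
  | empty => exact ⟨0, M.zero_mem, by simp⟩
  | insert g S _ ih =>
    obtain ⟨m, hm, hSm⟩ := ih fun x hx ↦ hS x (Finset.mem_insert_of_mem hx)
    obtain ⟨m', hm', hgm'⟩ := exists_add_mem_of_mem_closure (hS g (Finset.mem_insert_self g S))
    refine ⟨m + m', M.add_mem hm hm', fun x hx ↦ ?_⟩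
    rcases Finset.mem_insert.mp hx with rfl | hx
    · simpa [add_left_comm] using M.add_mem hm hgm'
    · simpa [add_assoc] using M.add_mem (hSm x hx) hm'

end AddSubmonoidClosure

namespace AddMonoidAlgebra

variable {R A : Type*}

theorem mem_adjoin_of'_image_iff [CommSemiring R] [AddMonoid A] {M : AddSubmonoid A}
    {f : R[A]} : f ∈ Algebra.adjoin R (of' R A '' M) ↔ ↑f.coeff.support ⊆ (M : Set A) := by
  have hclosed : ((Submonoid.closure (of' R A '' M) : Set R[A])) ⊆ of' R A '' M := by
    intro x hx
    induction hx using Submonoid.closure_induction with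
    | mem x hx => exact hx
    | one => exact ⟨0, M.zero_mem, one_def.symm⟩
    | mul x y _ _ hx hy =>
      obtain ⟨a, ha, rfl⟩ := hx
      obtain ⟨b, hb, rfl⟩ := hy
      exact ⟨a + b, M.add_mem ha hb, by simp [of', single_mul_single]⟩
  rw [← Subalgebra.mem_toSubmodule, Algebra.adjoin_eq_span_of_subset R
    (hclosed.trans Submodule.subset_span), ← mem_supported (R := R), supported_eq_span_single]
  rfl

section UniqueSums

variable {Γ : Type*} [Semiring R] [NoZeroDivisors R] [AddZeroClass A] [UniqueSums A]

theorem exists_isMaxOn_add_mem_support_mul [AddCommMonoid Γ] [LinearOrder Γ]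
    [IsOrderedCancelAddMonoid Γ] (φ : A →+ Γ) {f g : R[A]} (hf : f ≠ 0) (hg : g ≠ 0) :
    ∃ s ∈ f.coeff.support, ∃ t ∈ g.coeff.support, IsMaxOn φ f.coeff.support s ∧
      IsMaxOn φ g.coeff.support t ∧ s + t ∈ (f * g).coeff.support := by
  classical
  have top_nonempty : ∀ h : R[A], h ≠ 0 →
      (h.coeff.support.filter (IsMaxOn φ h.coeff.support)).Nonempty := fun h hh ↦ by
    obtain ⟨s, hs, hmax⟩ := h.coeff.support.exists_max_image φ (by simpa using hh)
    exact ⟨s, Finset.mem_filter.mpr ⟨hs, hmax⟩⟩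
  obtain ⟨s, hs, t, ht, huniq⟩ :=
    UniqueSums.uniqueAdd_of_nonempty (top_nonempty f hf) (top_nonempty g hg)
  obtain ⟨hsf, hsmax⟩ := Finset.mem_filter.mp hs
  obtain ⟨htg, htmax⟩ := Finset.mem_filter.mp ht
  -- a pair with the same sum has the same value of `φ`, hence is also a pair of maximizers
  have huniq' : UniqueAdd f.coeff.support g.coeff.support s t := by
    intro s' t' hs' ht' hsum
    have hφ := (add_eq_add_iff_eq_and_eq (hsmax hs') (htmax ht')).mp
      (by rw [← map_add, ← map_add, hsum])
    refine huniq (Finset.mem_filter.mpr ⟨hs', ?_⟩) (Finset.mem_filter.mpr ⟨ht', ?_⟩) hsum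
    · exact fun x hx ↦ hφ.1 ▸ hsmax hx
    · exact fun x hx ↦ hφ.2 ▸ htmax hx
  refine ⟨s, hsf, t, htg, hsmax, htmax, ?_⟩
  rw [Finsupp.mem_support_iff, coeff_mul_add_of_uniqueAdd huniq']
  exact mul_ne_zero (Finsupp.mem_support_iff.mp hsf) (Finsupp.mem_support_iff.mp htg)

theorem apply_eq_apply_of_forall_mem_support_mul [AddCommGroup Γ] [LinearOrder Γ]
    [IsOrderedAddMonoid Γ] (φ : A →+ Γ) {f g : R[A]} (hf : f ≠ 0) (hg : g ≠ 0)
    (hfg : ∀ x ∈ (f * g).coeff.support, φ x = 0) {s s' : A} (hs : s ∈ f.coeff.support)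
    (hs' : s' ∈ f.coeff.support) : φ s = φ s' := by
  suffices key : ∀ s ∈ f.coeff.support, ∀ s' ∈ f.coeff.support, φ s ≤ φ s' from
    le_antisymm (key s hs s' hs') (key s' hs' s hs)
  intro s hs s' hs'
  obtain ⟨s₁, -, t₁, ht₁, hs₁, -, hst₁⟩ := exists_isMaxOn_add_mem_support_mul φ hf hg
  obtain ⟨s₂, -, t₂, -, hs₂', ht₂, hst₂⟩ := exists_isMaxOn_add_mem_support_mul (-φ) hf hg
  have h₁ : φ s₁ = -φ t₁ := eq_neg_of_add_eq_zero_left (by rw [← map_add, hfg _ hst₁])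
  have h₂ : φ s₂ = -φ t₂ := eq_neg_of_add_eq_zero_left (by rw [← map_add, hfg _ hst₂])
  calc φ s ≤ φ s₁ := hs₁ hs
    _ = -φ t₁ := h₁
    _ ≤ -φ t₂ := by simpa using ht₂ ht₁
    _ = φ s₂ := h₂.symm
    _ ≤ φ s' := by simpa using hs₂' hs'

end UniqueSums

theorem exists_eq_single_of_isUnit_s1 [Semiring R] [IsDomain R] [AddCommGroup A]
    [IsAddTorsionFree A] [UniqueSums A] {u : R[A]} (hu : IsUnit u) :
    ∃ a r, r ≠ 0 ∧ u = single a r := by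
  obtain ⟨v, huv⟩ := hu.exists_right_inv
  have hv : v ≠ 0 := by rintro rfl; simp at huv
  obtain ⟨w, hw⟩ := Finsupp.support_nonempty_iff.mpr (mt coeff_eq_zero.mp hu.ne_zero)
  have hsupp : u.coeff.support = {w} := by
    refine Finset.eq_singleton_iff_unique_mem.mpr ⟨hw, fun s hs ↦ ?_⟩
    by_contra hsw
    obtain ⟨φ, -, hφ⟩ := AddSubgroup.exists_addMonoidHom_rat (H := ⊥) (z := s - w)
      fun k hk ↦ (smul_eq_zero.mp hk).resolve_right (sub_ne_zero.mpr hsw)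
    have hφ0 : ∀ x ∈ (u * v).coeff.support, φ x = 0 := by
      simp [huv, one_def]
    rw [map_sub, apply_eq_apply_of_forall_mem_support_mul φ hu.ne_zero hv hφ0 hs hw, sub_self] at hφ
    exact zero_ne_one hφ
  obtain ⟨hw0, hu⟩ := Finsupp.support_eq_singleton.mp hsupp
  exact ⟨w, u.coeff w, hw0, coeff_injective (by simpa using hu)⟩

variable [CommRing R] [IsDomain R] [AddCommGroup A] [UniqueSums A] {M : AddSubmonoid A}

theorem nsmulSaturated_closure_of_isQfc [IsAddTorsionFree A]
    (h : IsQfc (Algebra.adjoin R (of' R A '' M))) :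
    (AddSubgroup.closure (M : Set A)).NSMulSaturated := by
  intro k a hka
  refine or_iff_not_imp_left.mpr fun hk ↦ ?_
  obtain rfl | ha := eq_or_ne a 0
  · exact zero_mem _
  obtain ⟨m, hm, hkam⟩ := AddSubgroup.exists_add_mem_of_mem_closure hka
  -- `x ^ a - 1` divides `x ^ (k • a + m) - x ^ m`, which lies in `R[M]`
  have hprod : (single a 1 - 1) * (single m 1 * ∑ j ∈ Finset.range k, single a (1 : R) ^ j) =
      single (k • a + m) 1 - single m 1 := by
    rw [mul_left_comm, mul_geom_sum, single_pow, one_pow, mul_sub, single_mul_single, mul_one,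
      add_comm, mul_one]
  have hne : single (k • a + m) (1 : R) - single m 1 ≠ 0 := by
    refine sub_ne_zero.mpr fun h ↦ ?_
    have hka0 : k • a = 0 := add_eq_right.mp (single_left_injective one_ne_zero h)
    exact hk ((smul_eq_zero.mp hka0).resolve_right ha)
  have hmem : single (k • a + m) (1 : R) - single m 1 ∈ Algebra.adjoin R (of' R A '' M) :=
    sub_mem (Algebra.subset_adjoin ⟨_, hkam, rfl⟩) (Algebra.subset_adjoin ⟨m, hm, rfl⟩)
  rw [← hprod] at hne hmem
  obtain ⟨u, -, hu, -⟩ := h _ _ (left_ne_zero_of_mul hne) (right_ne_zero_of_mul hne) hmem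
  obtain ⟨w, c, hc, huw⟩ := exists_eq_single_of_isUnit_s1 u.isUnit
  rw [huw, mul_sub, single_mul_single, mul_one, mul_one, mem_adjoin_of'_image_iff] at hu
  have hwa : w + a ∈ M := hu (by simp [ha, hc])
  have hw : w ∈ M := hu (by simp [ha, hc])
  simpa using sub_mem (AddSubgroup.subset_closure hwa) (AddSubgroup.subset_closure hw)

theorem exists_unit_mul_mem_adjoin_of_mul_mem
    (hsat : (AddSubgroup.closure (M : Set A)).NSMulSaturated) {f g : R[A]} (hf : f ≠ 0)
    (hg : g ≠ 0) (hfg : f * g ∈ Algebra.adjoin R (of' R A '' M)) :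
    ∃ u : R[A]ˣ, ↑u * f ∈ Algebra.adjoin R (of' R A '' M) := by
  classical
  obtain ⟨s₀, hs₀⟩ := Finsupp.support_nonempty_iff.mpr (mt coeff_eq_zero.mp hf)
  -- a functional separating `s - s₀` from `⟨M⟩` would be constant on `supp f`
  have hcoset : ∀ s ∈ f.coeff.support, s - s₀ ∈ AddSubgroup.closure (M : Set A) := by
    intro s hs
    by_contra hsG
    obtain ⟨φ, hφG, hφ⟩ :=
      AddSubgroup.exists_addMonoidHom_rat fun k hk ↦ (hsat hk).resolve_right hsG
    have hφfg : ∀ x ∈ (f * g).coeff.support, φ x = 0 := fun x hx ↦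
      hφG x (AddSubgroup.subset_closure (mem_adjoin_of'_image_iff.mp hfg hx))
    rw [map_sub, apply_eq_apply_of_forall_mem_support_mul φ hf hg hφfg hs hs₀, sub_self] at hφ
    exact zero_ne_one hφ
  obtain ⟨m, -, hm⟩ := AddSubgroup.exists_forall_add_mem_of_subset_closure
    (f.coeff.support.image (· - s₀)) (by simpa using hcoset)
  have hunit : IsUnit (single (m - s₀) (1 : R)) :=
    .of_mul_eq_one (single (s₀ - m) 1) (by simp [single_mul_single, one_def])
  refine ⟨hunit.unit, mem_adjoin_of'_image_iff.mpr fun x hx ↦ ?_⟩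
  simp only [IsUnit.unit_spec, Finset.mem_coe, Finsupp.mem_support_iff, coeff_single_mul_apply,
    one_mul] at hx
  have hxm := hm _ (Finset.mem_image_of_mem _ (Finsupp.mem_support_iff.mpr hx))
  rwa [show -(m - s₀) + x - s₀ + m = x by abel] at hxm

theorem isQfc_adjoin_of'_image_iff [IsAddTorsionFree A] :
    IsQfc (Algebra.adjoin R (of' R A '' M)) ↔
      (AddSubgroup.closure (M : Set A)).NSMulSaturated := by
  refine ⟨nsmulSaturated_closure_of_isQfc, fun hsat f g hf hg hfg ↦ ?_⟩
  obtain ⟨u, hu⟩ := exists_unit_mul_mem_adjoin_of_mul_mem hsat hf hg hfg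
  obtain ⟨v, hv⟩ := exists_unit_mul_mem_adjoin_of_mul_mem hsat hg hf (mul_comm f g ▸ hfg)
  exact ⟨u, v, hu, hv⟩

end AddMonoidAlgebra

theorem AddMonoidHom.exists_linearMap_real_apply_intCast {ι : Type*} [Fintype ι]
    (φ : (ι → ℤ) →+ ℚ) :
    ∃ L : (ι → ℝ) →ₗ[ℝ] ℝ, ∀ a : ι → ℤ, L (fun i ↦ (a i : ℝ)) = φ a := by
  classical
  refine ⟨∑ i, (φ (Pi.single i 1) : ℝ) • LinearMap.proj i, fun a ↦ ?_⟩
  have hsingle : ∀ i, (Pi.single i (a i) : ι → ℤ) = a i • Pi.single i 1 := fun i ↦ by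
    rw [← Pi.single_smul, smul_eq_mul, mul_one]
  conv_rhs => rw [← Finset.univ_sum_single a]
  simp only [hsingle, map_sum, map_zsmul]
  simp [mul_comm]

theorem mem_coneOf_iff {n : ℕ} {G : AddSubgroup (Fin n → ℤ)} {z : Fin n → ℤ} :
    (fun i ↦ (z i : ℝ)) ∈ coneOf (G : Set (Fin n → ℤ)) ↔ ∃ k : ℕ, k ≠ 0 ∧ k • z ∈ G := by
  constructor
  · rintro ⟨c, hcG, -, hz⟩
    by_contra! hzG
    obtain ⟨φ, hφG, hφz⟩ := AddSubgroup.exists_addMonoidHom_rat (H := G) (z := z)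
      fun k hk ↦ by_contra fun hk0 ↦ hzG k hk0 hk
    obtain ⟨L, hL⟩ := φ.exists_linearMap_real_apply_intCast
    have := congrArg L hz
    rw [hL, hφz, Rat.cast_one, map_finsuppSum] at this
    refine one_ne_zero (this.trans (Finset.sum_eq_zero fun a ha ↦ ?_))
    simp [hL, hφG a (hcG ha)]
  · rintro ⟨k, hk, hkz⟩
    refine ⟨Finsupp.single (k • z) (k : ℝ)⁻¹, ?_, fun a ↦ ?_, ?_⟩
    · exact (Finset.coe_subset.mpr Finsupp.support_single_subset).trans (by simpa using hkz)
    · rw [Finsupp.single_apply]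
      split_ifs <;> positivity
    · rw [Finsupp.sum_single_index (by simp)]
      ext i
      simp [hk]

theorem setOf_mem_coneOf_eq_iff {n : ℕ} {G : AddSubgroup (Fin n → ℤ)} :
    {a : Fin n → ℤ | (fun i ↦ (a i : ℝ)) ∈ coneOf (G : Set (Fin n → ℤ))} = G ↔
      G.NSMulSaturated := by
  simp only [Set.ext_iff, Set.mem_ofPred_eq, mem_coneOf_iff, SetLike.mem_coe]
  refine ⟨fun h k z hkz ↦ or_iff_not_imp_left.mpr fun hk ↦ (h z).mp ⟨k, hk, hkz⟩,
    fun h z ↦ ⟨fun ⟨k, hk, hkz⟩ ↦ (h hkz).resolve_left hk, fun hz ↦ ⟨1, one_ne_zero, by simpa⟩⟩⟩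

theorem monomialSubalgebra_isQfc_iff_cone_general
    (R : Type*) [CommRing R] [IsDomain R] (n : ℕ)
    (M : AddSubmonoid (Fin n → ℤ)) :
    IsQfc (monomialSubalgebra R M) ↔
      {a : Fin n → ℤ |
          (fun i => (a i : ℝ)) ∈
            coneOf ((AddSubgroup.closure (M : Set (Fin n → ℤ)) : AddSubgroup (Fin n → ℤ)) :
              Set (Fin n → ℤ))} =
        ((AddSubgroup.closure (M : Set (Fin n → ℤ)) : AddSubgroup (Fin n → ℤ)) :
          Set (Fin n → ℤ)) := by
  rw [setOf_mem_coneOf_eq_iff]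
  exact AddMonoidAlgebra.isQfc_adjoin_of'_image_iff

/-- `R[M]` is qfc in `B = R[x₁^{±1},…,xₙ^{±1}]` iff `Cone(⟨M⟩) ∩ ℤⁿ = ⟨M⟩`. -/
theorem monomialSubalgebra_isQfc_iff_cone
    (R : Type*) [CommRing R] [IsDomain R] (n : ℕ) (hn : 1 ≤ n)
    (M : AddSubmonoid (Fin n → ℤ)) :
    IsQfc (monomialSubalgebra R M) ↔
      {a : Fin n → ℤ |
          (fun i => (a i : ℝ)) ∈
            coneOf ((AddSubgroup.closure (M : Set (Fin n → ℤ)) : AddSubgroup (Fin n → ℤ)) :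
              Set (Fin n → ℤ))} =
        ((AddSubgroup.closure (M : Set (Fin n → ℤ)) : AddSubgroup (Fin n → ℤ)) :
          Set (Fin n → ℤ)) :=
  monomialSubalgebra_isQfc_iff_cone_general R n M
end

section
/- Let R be a domain, n ≥ 1, B = R[x₁^{±1},…,xₙ^{±1}] the Laurent polynomial ring in n variables over R, and A an R-subalgebra of B. If the gap set Gap(A) is a finite set, then A is quasi-factorially closed in B. -/
/-- `M(A)`: the set of `a ∈ ℤⁿ` with `x^a ∈ A`. -/
def monSet {R : Type*} [CommRing R] {n : ℕ}
    (A : Set (AddMonoidAlgebra R (Fin n → ℤ))) : Set (Fin n → ℤ) :=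
  {a | AddMonoidAlgebra.of' R (Fin n → ℤ) a ∈ A}

/-- `S(A)`: the union of the supports of the elements of `A`. -/
def suppSet {R : Type*} [CommRing R] {n : ℕ}
    (A : Set (AddMonoidAlgebra R (Fin n → ℤ))) : Set (Fin n → ℤ) :=
  {a | ∃ f ∈ A, a ∈ f.coeff.support}

/-- `C(A)`: lattice points of `ℤⁿ` in the cone generated by `S(A)`. -/
def latticeCone {R : Type*} [CommRing R] {n : ℕ}
    (A : Set (AddMonoidAlgebra R (Fin n → ℤ))) : Set (Fin n → ℤ) :=
  {a | (fun i => (a i : ℝ)) ∈ coneOf (suppSet A)}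

/-- The gap set `Gap(A) = C(A) \ M(A)`. -/
def gapSet {R : Type*} [CommRing R] {n : ℕ}
    (A : Set (AddMonoidAlgebra R (Fin n → ℤ))) : Set (Fin n → ℤ) :=
  latticeCone A \ monSet A

/-! For `a * b ∈ A`, each vertex of the Newton polytope `conv(supp a + supp b)` has a unique
decomposition `α + β`, hence lies in `supp (a * b)`; by Krein–Milman, `supp a + supp b ⊆ C(A)`.
If some `γ = α₁ + β₁` is nonzero, the translates `supp a + β₀ + k • γ` all stay in the additive
monoid `C(A)` and are pairwise distinct in `k`, so finiteness of `Gap(A)` puts one of them inside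
`M(A)`; the corresponding monomial unit moves `a` into `A`. If all the sums vanish, `a` is a
monomial and `x^β₀ * a` is a constant. -/

open Pointwise

theorem uniqueAdd_of_add_mem_extremePoints {𝕜 E : Type*} [Field 𝕜] [LinearOrder 𝕜]
    [IsStrictOrderedRing 𝕜] [AddCommGroup E] [Module 𝕜 E] [DecidableEq E]
    {s t : Finset E} {x y : E} (hx : x ∈ s) (hy : y ∈ t)
    (hext : x + y ∈ (convexHull 𝕜 (↑(s + t) : Set E)).extremePoints 𝕜) :
    UniqueAdd s t x y := by
  intro x' y' hx' hy' hsum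
  have mem_hull : ∀ {u v}, u ∈ s → v ∈ t → u + v ∈ convexHull 𝕜 (↑(s + t) : Set E) :=
    fun hu hv => subset_convexHull 𝕜 _ (Finset.mem_coe.2 (Finset.add_mem_add hu hv))
  have hmid : x + y ∈ openSegment 𝕜 (x + y') (x' + y) := by
    refine ⟨1 / 2, 1 / 2, by norm_num, by norm_num, by norm_num, ?_⟩
    rw [← smul_add, show x + y' + (x' + y) = (x' + y') + (x + y) by abel, hsum, ← two_smul 𝕜,
      smul_smul]
    norm_num
  obtain ⟨h₁, h₂⟩ := (mem_extremePoints.1 hext).2 _ (mem_hull hx hy') _ (mem_hull hx' hy) hmid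
  exact ⟨add_right_cancel h₂, add_left_cancel h₁⟩

theorem Set.Finite.convexHull_extremePoints_convexHull {E : Type*} [AddCommGroup E] [Module ℝ E]
    [TopologicalSpace E] [T2Space E] [IsTopologicalAddGroup E] [ContinuousSMul ℝ E]
    [LocallyConvexSpace ℝ E] {s : Set E} (hs : s.Finite) :
    convexHull ℝ ((convexHull ℝ s).extremePoints ℝ) = convexHull ℝ s := by
  have hext : ((convexHull ℝ s).extremePoints ℝ).Finite := hs.subset extremePoints_convexHull_subset
  simpa only [(hext.isClosed_convexHull ℝ).closure_eq] using
    closure_convexHull_extremePoints (hs.isCompact_convexHull ℝ) (convex_convexHull ℝ s)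

open AddMonoidAlgebra in
theorem map_add_mem_convexHull_image_support_mul {R G E : Type*} [Semiring R] [NoZeroDivisors R]
    [AddCommMonoid G] [AddCommGroup E] [Module ℝ E]
    [TopologicalSpace E] [T2Space E] [IsTopologicalAddGroup E] [ContinuousSMul ℝ E]
    [LocallyConvexSpace ℝ E] (f : G →+ E) (hf : Function.Injective f) {a b : R[G]} {α β : G}
    (hα : α ∈ a.coeff.support) (hβ : β ∈ b.coeff.support) :
    f (α + β) ∈ convexHull ℝ (f '' (a * b).coeff.support) := by
  classical
  set Q := convexHull ℝ (↑(a.coeff.support.image f + b.coeff.support.image f) : Set E)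
  have hQ : convexHull ℝ (Q.extremePoints ℝ) = Q :=
    (Finset.finite_toSet _).convexHull_extremePoints_convexHull
  have hext : Q.extremePoints ℝ ⊆ f '' (a * b).coeff.support := by
    intro e he
    obtain ⟨_, hx, _, hy, rfl⟩ := Finset.mem_add.1 (extremePoints_convexHull_subset he)
    obtain ⟨α', hα', rfl⟩ := Finset.mem_image.1 hx
    obtain ⟨β', hβ', rfl⟩ := Finset.mem_image.1 hy
    have huniq : UniqueAdd a.coeff.support b.coeff.support α' β' :=
      (UniqueAdd.addHom_image_iff f.toAddHom hf).1 (uniqueAdd_of_add_mem_extremePoints hx hy he)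
    refine ⟨α' + β', ?_, map_add f α' β'⟩
    rw [Finset.mem_coe, Finsupp.mem_support_iff, coeff_mul_add_of_uniqueAdd huniq]
    exact mul_ne_zero (Finsupp.mem_support_iff.1 hα') (Finsupp.mem_support_iff.1 hβ')
  have hαβ : f (α + β) ∈ Q := subset_convexHull ℝ _ <| by
    rw [map_add]
    exact Finset.mem_coe.2 (Finset.add_mem_add (Finset.mem_image_of_mem f hα)
      (Finset.mem_image_of_mem f hβ))
  rw [← hQ] at hαβ
  exact convexHull_mono hext hαβ

section Lattice

open AddMonoidAlgebra

variable {n : ℕ}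

def latticeToReal (n : ℕ) : (Fin n → ℤ) →+ (Fin n → ℝ) := (Int.castAddHom ℝ).compLeft (Fin n)

theorem latticeToReal_injective : Function.Injective (latticeToReal n) :=
  fun _ _ h => funext fun i => Int.cast_injective (congrFun h i)

theorem mem_coneOf_iff_s2 {D : Set (Fin n → ℤ)} {x : Fin n → ℝ} :
    x ∈ coneOf D ↔ ∃ c : (Fin n → ℤ) →₀ ℝ, (↑c.support : Set (Fin n → ℤ)) ⊆ D ∧
      (∀ a, 0 ≤ c a) ∧ x = Finsupp.linearCombination ℝ (latticeToReal n) c := by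
  simp only [Finsupp.linearCombination_apply]
  rfl

def pointedConeOf (D : Set (Fin n → ℤ)) : PointedCone ℝ (Fin n → ℝ) where
  carrier := coneOf D
  zero_mem' := mem_coneOf_iff_s2.2 ⟨0, by simp, fun _ => le_rfl, by simp⟩
  add_mem' := by
    intro _ _ hx hy
    obtain ⟨c, hcD, hc, rfl⟩ := mem_coneOf_iff_s2.1 hx
    obtain ⟨d, hdD, hd, rfl⟩ := mem_coneOf_iff_s2.1 hy
    refine mem_coneOf_iff_s2.2 ⟨c + d, ?_, fun a => add_nonneg (hc a) (hd a), ?_⟩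
    · exact (Finset.coe_subset.2 Finsupp.support_add).trans (by simpa using ⟨hcD, hdD⟩)
    · rw [map_add]
  smul_mem' := by
    rintro ⟨t, ht⟩ _ hx
    obtain ⟨c, hcD, hc, rfl⟩ := mem_coneOf_iff_s2.1 hx
    refine mem_coneOf_iff_s2.2 ⟨t • c, ?_, fun a => mul_nonneg ht (hc a), ?_⟩
    · exact (Finset.coe_subset.2 Finsupp.support_smul).trans hcD
    · rw [map_smul]; rfl

theorem latticeToReal_mem_coneOf {D : Set (Fin n → ℤ)} {a : Fin n → ℤ} (ha : a ∈ D) :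
    latticeToReal n a ∈ coneOf D :=
  mem_coneOf_iff_s2.2 ⟨Finsupp.single a 1, by simpa using ha,
    fun b => by by_cases h : a = b <;> simp [h], by simp⟩

theorem convexHull_image_latticeToReal_subset_coneOf (D : Set (Fin n → ℤ)) :
    convexHull ℝ (latticeToReal n '' D) ⊆ coneOf D :=
  convexHull_min (Set.image_subset_iff.2 fun _ => latticeToReal_mem_coneOf)
    (pointedConeOf D).convex

theorem coneOf_mono {D D' : Set (Fin n → ℤ)} (h : D ⊆ D') : coneOf D ⊆ coneOf D' := by
  rintro _ ⟨c, hcD, hc, hx⟩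
  exact ⟨c, hcD.trans h, hc, hx⟩

variable {R : Type*} [CommRing R]

def latticeConeAddSubmonoid (A : Set R[Fin n → ℤ]) : AddSubmonoid (Fin n → ℤ) :=
  (pointedConeOf (suppSet A)).toAddSubmonoid.comap (latticeToReal n)

theorem support_subset_suppSet {A : Set R[Fin n → ℤ]} {f : R[Fin n → ℤ]} (hf : f ∈ A) :
    ↑f.coeff.support ⊆ suppSet A :=
  fun _ h => ⟨f, hf, h⟩

theorem add_mem_latticeCone_of_mul_mem [NoZeroDivisors R] {A : Set R[Fin n → ℤ]}
    {a b : R[Fin n → ℤ]} (hab : a * b ∈ A) {α β : Fin n → ℤ} (hα : α ∈ a.coeff.support)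
    (hβ : β ∈ b.coeff.support) : α + β ∈ latticeCone A :=
  coneOf_mono (support_subset_suppSet hab) <| convexHull_image_latticeToReal_subset_coneOf _ <|
    map_add_mem_convexHull_image_support_mul _ latticeToReal_injective hα hβ

theorem exists_forall_add_nsmul_mem_monSet {A : Set R[Fin n → ℤ]} (hgap : (gapSet A).Finite)
    {F : Finset (Fin n → ℤ)} (hF : ∀ φ ∈ F, φ ∈ latticeCone A) {γ : Fin n → ℤ}
    (hγ : γ ∈ latticeCone A) (hγ₀ : γ ≠ 0) : ∃ k : ℕ, ∀ φ ∈ F, φ + k • γ ∈ monSet A := by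
  have hinj : Function.Injective fun k : ℕ => k • γ := fun k l h =>
    Nat.cast_injective (smul_left_injective ℤ hγ₀ (by simpa only [natCast_zsmul] using h))
  have hbad : (⋃ φ ∈ F, (fun k : ℕ => φ + k • γ) ⁻¹' gapSet A).Finite :=
    F.finite_toSet.biUnion fun φ _ => hgap.preimage ((add_right_injective φ).comp hinj).injOn
  obtain ⟨k, hk⟩ := hbad.infinite_compl.nonempty
  refine ⟨k, fun φ hφ => by_contra fun hmon => hk (Set.mem_biUnion hφ ⟨?_, hmon⟩)⟩
  exact (latticeConeAddSubmonoid A).add_mem (hF φ hφ) (nsmul_mem hγ k)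

theorem single_mul_mem_of_forall_add_mem_monSet {A : Subalgebra R R[Fin n → ℤ]}
    {a : R[Fin n → ℤ]} {m : Fin n → ℤ}
    (h : ∀ α ∈ a.coeff.support, m + α ∈ monSet (A : Set R[Fin n → ℤ])) :
    single m 1 * a ∈ A := by
  classical
  rw [← sum_coeff_single a, Finsupp.sum, Finset.mul_sum]
  refine A.sum_mem fun α hα => ?_
  rw [single_mul_single, one_mul, ← mul_one (a.coeff α), ← smul_single']
  exact A.smul_mem (h α hα) _

theorem exists_forall_add_mem_monSet_of_mul_mem [NoZeroDivisors R]
    {A : Subalgebra R R[Fin n → ℤ]} (hgap : (gapSet (A : Set R[Fin n → ℤ])).Finite)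
    {a b : R[Fin n → ℤ]} (hb : b ≠ 0) (hab : a * b ∈ A) :
    ∃ m, ∀ α ∈ a.coeff.support, m + α ∈ monSet (A : Set R[Fin n → ℤ]) := by
  classical
  obtain ⟨β₀, hβ₀⟩ : b.coeff.support.Nonempty := by simpa using hb
  have hC : ∀ {α β}, α ∈ a.coeff.support → β ∈ b.coeff.support →
      α + β ∈ latticeCone (A : Set R[Fin n → ℤ]) :=
    add_mem_latticeCone_of_mul_mem hab
  by_cases hdeg : ∀ α ∈ a.coeff.support, ∀ β ∈ b.coeff.support, α + β = 0
  · refine ⟨β₀, fun α hα => ?_⟩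
    rw [add_comm, hdeg α hα β₀ hβ₀]
    exact A.one_mem
  push Not at hdeg
  obtain ⟨α₁, hα₁, β₁, hβ₁, hγ₀⟩ := hdeg
  obtain ⟨k, hk⟩ := exists_forall_add_nsmul_mem_monSet hgap
    (F := a.coeff.support.image (· + β₀)) (Finset.forall_mem_image.2 fun _ hα => hC hα hβ₀)
    (hC hα₁ hβ₁) hγ₀
  refine ⟨β₀ + k • (α₁ + β₁), fun α hα => ?_⟩
  simpa only [add_comm, add_left_comm, add_assoc] using hk _ (Finset.mem_image_of_mem _ hα)

theorem exists_unit_mul_mem_of_mul_mem [NoZeroDivisors R]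
    {A : Subalgebra R R[Fin n → ℤ]} (hgap : (gapSet (A : Set R[Fin n → ℤ])).Finite)
    {a b : R[Fin n → ℤ]} (hb : b ≠ 0) (hab : a * b ∈ A) :
    ∃ u : R[Fin n → ℤ]ˣ, ↑u * a ∈ A := by
  obtain ⟨m, hm⟩ := exists_forall_add_mem_monSet_of_mul_mem hgap hb hab
  refine ⟨Units.map (of R _) (toUnits (Multiplicative.ofAdd m)), ?_⟩
  simpa using single_mul_mem_of_forall_add_mem_monSet hm

end Lattice

theorem isQfc_of_finite_gapSet_general (R : Type*) [CommRing R] [IsDomain R] (n : ℕ)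
    (A : Subalgebra R (AddMonoidAlgebra R (Fin n → ℤ)))
    (hgap : (gapSet (A : Set (AddMonoidAlgebra R (Fin n → ℤ)))).Finite) :
    IsQfc A := by
  intro a b ha hb hab
  obtain ⟨u, hu⟩ := exists_unit_mul_mem_of_mul_mem hgap hb hab
  obtain ⟨v, hv⟩ := exists_unit_mul_mem_of_mul_mem hgap ha (mul_comm a b ▸ hab)
  exact ⟨u, v, hu, hv⟩

/-- If `Gap(A)` is finite, then `A` is qfc in `B = R[x₁^{±1},…,xₙ^{±1}]`. -/
theorem isQfc_of_finite_gapSet (R : Type*) [CommRing R] [IsDomain R] (n : ℕ) (hn : 1 ≤ n)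
    (A : Subalgebra R (AddMonoidAlgebra R (Fin n → ℤ)))
    (hgap : (gapSet (A : Set (AddMonoidAlgebra R (Fin n → ℤ)))).Finite) :
    IsQfc A :=
  isQfc_of_finite_gapSet_general R n A hgap
end

section
/- Let R be a domain, n ≥ 1, B = R[x₁^{±1},…,xₙ^{±1}] the Laurent polynomial ring in n variables over R, and A an R-subalgebra of B generated as an R-algebra by monic monomials (i.e., by elements x^a for a in some subset of ℤⁿ). Let S = A ∩ B^× and let S⁻¹A = {b ∈ B : s·b ∈ A for some s ∈ S}. Then A is quasi-factorially closed in B if and only if Gap(S⁻¹A) = ∅. -/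
/-- The localization `S⁻¹A` of `A` at `S = A ∩ B^×`, identified with an `R`-subalgebra of `B`. -/
def locSet {B : Type*} [CommRing B] (A : Set B) : Set B :=
  {b | ∃ s ∈ A, IsUnit s ∧ s * b ∈ A}

namespace AddMonoidAlgebra

section UniqueSums

variable {R G : Type*} [Semiring R] [NoZeroDivisors R]

theorem subsingleton_support_of_mul_left [Add G] [TwoUniqueSums G] {p q : R[G]} (hq : q ≠ 0)
    (hpq : (↑(p * q).coeff.support : Set G).Subsingleton) :
    (↑p.coeff.support : Set G).Subsingleton := by
  by_contra hp
  have hcard : 1 < p.coeff.support.card * q.coeff.support.card := by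
    have hp₁ : 1 < p.coeff.support.card :=
      Finset.one_lt_card_iff_nontrivial.2 (Set.not_subsingleton_iff.1 hp)
    have hq₀ : 0 < q.coeff.support.card :=
      Finset.card_pos.2 (Finsupp.support_nonempty_iff.2 (coeff_eq_zero.not.2 hq))
    nlinarith
  obtain ⟨⟨a₁, b₁⟩, h₁, ⟨a₂, b₂⟩, h₂, hne, hu₁, hu₂⟩ :=
    TwoUniqueSums.uniqueAdd_of_one_lt_card hcard
  rw [Finset.mem_product, Finsupp.mem_support_iff, Finsupp.mem_support_iff] at h₁ h₂
  have hmem {a b : G} (hu : UniqueAdd p.coeff.support q.coeff.support a b) (ha : p.coeff a ≠ 0)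
      (hb : q.coeff b ≠ 0) : a + b ∈ (↑(p * q).coeff.support : Set G) := by
    simpa [coeff_mul_add_of_uniqueAdd hu] using mul_ne_zero ha hb
  have hsum := hpq (hmem hu₁ h₁.1 h₁.2) (hmem hu₂ h₂.1 h₂.2)
  obtain ⟨rfl, rfl⟩ :=
    hu₁ (Finsupp.mem_support_iff.2 h₂.1) (Finsupp.mem_support_iff.2 h₂.2) hsum.symm
  exact hne rfl

theorem exists_eq_single_of_isUnit_s3 [Nontrivial R] [AddMonoid G] [TwoUniqueSums G] {u : R[G]}
    (hu : IsUnit u) : ∃ g r, r ≠ 0 ∧ u = single g r := by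
  obtain ⟨v, huv⟩ := hu.exists_right_inv
  have hsupp : (↑u.coeff.support : Set G).Subsingleton := by
    refine subsingleton_support_of_mul_left (right_ne_zero_of_mul_eq_one huv) ?_
    rw [huv, one_def, coeff_single, Finsupp.support_single _ one_ne_zero,
      Finset.coe_singleton]
    exact Set.subsingleton_singleton
  obtain ⟨g, hg⟩ := Finsupp.support_nonempty_iff.2 (coeff_eq_zero.not.2 hu.ne_zero)
  refine ⟨g, u.coeff g, Finsupp.mem_support_iff.1 hg, ext ?_⟩
  rw [coeff_single, ← Finsupp.support_subset_singleton]
  exact fun x hx => Finset.mem_singleton.2 (hsupp hx hg)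

end UniqueSums

section Grading

variable {R G H : Type*} [Semiring R] [AddMonoid G] [AddMonoid H]

/-- The ring embedding `x^g ↦ t^(f g) x^g` of `R[G]` into `R[G][H]`. -/
noncomputable def splitByGrade (f : G →+ H) : R[G] →+* R[G][H] :=
  curryRingEquiv.toRingHom.comp (mapDomainRingHom R (f.prod (AddMonoidHom.id G)))

theorem coeff_coeff_splitByGrade [DecidableEq H] (f : G →+ H) (x : R[G]) (h : H) (g : G) :
    ((splitByGrade f x).coeff h).coeff g = if f g = h then x.coeff g else 0 := by
  classical
  induction x using induction_linear with
  | zero => simp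
  | add x y hx hy => simp [hx, hy, ite_add_ite]
  | single m r =>
    simp only [splitByGrade, RingHom.coe_comp, Function.comp_apply, mapDomainRingHom_apply,
      mapDomain_single, AddMonoidHom.prod_apply, AddMonoidHom.id_apply, RingEquiv.toRingHom_eq_coe,
      RingHom.coe_coe, curryRingEquiv_single, coeff_single, Finsupp.single_apply]
    split_ifs <;> aesop (add simp Finsupp.single_apply)

theorem support_splitByGrade (f : G →+ H) (x : R[G]) :
    (↑(splitByGrade f x).coeff.support : Set H) = f '' ↑x.coeff.support := by
  classical
  ext h
  simp only [Finset.mem_coe, Finsupp.mem_support_iff, Set.mem_image, ne_eq, ← coeff_eq_zero,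
    Finsupp.ext_iff, coeff_coeff_splitByGrade, Finsupp.coe_zero, Pi.zero_apply, not_forall]
  aesop

theorem subsingleton_image_support_of_mul_left [NoZeroDivisors R] [UniqueSums G]
    [TwoUniqueSums H] (f : G →+ H) {p q : R[G]} (hq : q ≠ 0)
    (hpq : (f '' ↑(p * q).coeff.support).Subsingleton) :
    (f '' ↑p.coeff.support).Subsingleton := by
  rw [← support_splitByGrade] at hpq ⊢
  refine subsingleton_support_of_mul_left (fun h0 => hq ?_) (by rwa [← map_mul])
  have hsupp := support_splitByGrade f q
  simpa [h0, eq_comm (a := ∅)] using hsupp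

end Grading

end AddMonoidAlgebra

namespace AddSubmonoid

variable {Γ : Type*} [AddCommGroup Γ]

theorem exists_add_mem_of_mem_closure {M : AddSubmonoid Γ} {d : Γ}
    (hd : d ∈ AddSubgroup.closure (M : Set Γ)) : ∃ m ∈ M, m + d ∈ M := by
  induction hd using AddSubgroup.closure_induction with
  | mem x hx => exact ⟨0, M.zero_mem, by simpa using hx⟩
  | zero => exact ⟨0, M.zero_mem, by simp⟩
  | add x y _ _ hx hy =>
    obtain ⟨m, hm, hmx⟩ := hx
    obtain ⟨m', hm', hmy⟩ := hy
    exact ⟨m + m', add_mem hm hm', by simpa [add_add_add_comm] using add_mem hmx hmy⟩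
  | neg x _ hx =>
    obtain ⟨m, hm, hmx⟩ := hx
    exact ⟨m + x, hmx, by simpa using hm⟩

theorem exists_add_mem_of_subset_closure {M : AddSubmonoid Γ} (s : Finset Γ)
    (hs : ↑s ⊆ (AddSubgroup.closure (M : Set Γ) : Set Γ)) : ∃ e ∈ M, ∀ d ∈ s, e + d ∈ M := by
  classical
  induction s using Finset.induction_on with
  | empty => exact ⟨0, M.zero_mem, by simp⟩
  | insert d s _ ih =>
    rw [Finset.coe_insert, Set.insert_subset_iff] at hs
    obtain ⟨e, he, hes⟩ := ih hs.2
    obtain ⟨m, hm, hmd⟩ := exists_add_mem_of_mem_closure hs.1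
    refine ⟨e + m, add_mem he hm, fun x hx => ?_⟩
    rcases Finset.mem_insert.1 hx with rfl | hx
    · simpa [add_assoc] using add_mem he hmd
    · simpa [add_right_comm] using add_mem (hes x hx) hm

theorem NSMulSaturated.isAddTorsionFree_quotient {H : AddSubgroup Γ} (hH : H.NSMulSaturated) :
    IsAddTorsionFree (Γ ⧸ H) := by
  refine .of_not_isOfFinAddOrder fun q hq hfin => hq ?_
  obtain ⟨g, rfl⟩ := QuotientAddGroup.mk_surjective q
  obtain ⟨k, hk, hkg⟩ := hfin.exists_nsmul_eq_zero
  rw [← QuotientAddGroup.mk_nsmul, QuotientAddGroup.eq_zero_iff] at hkg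
  exact (QuotientAddGroup.eq_zero_iff g).2 ((hH hkg).resolve_left hk.ne')

theorem NSMulSaturated.exists_addMonoidHom_int [AddGroup.FG Γ] {H : AddSubgroup Γ}
    (hH : H.NSMulSaturated) {a : Γ} (ha : a ∉ H) : ∃ φ : Γ →+ ℤ, H ≤ φ.ker ∧ φ a ≠ 0 := by
  have := hH.isAddTorsionFree_quotient
  have : Module.Finite ℤ (Γ ⧸ H) := Module.Finite.iff_addGroup_fg.2 inferInstance
  let b := Module.Free.chooseBasis ℤ (Γ ⧸ H)
  obtain ⟨i, hi⟩ : ∃ i, b.repr (a : Γ ⧸ H) i ≠ 0 := by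
    by_contra! h
    exact ha ((QuotientAddGroup.eq_zero_iff a).1 (b.repr.map_eq_zero_iff.1 (Finsupp.ext h)))
  refine ⟨(b.coord i).toAddMonoidHom.comp (QuotientAddGroup.mk' H), fun x hx => ?_, hi⟩
  simp [(QuotientAddGroup.eq_zero_iff x).2 hx]

end AddSubmonoid

section Cone

variable {n : ℕ}

theorem coneOf_subset_span (D : Set (Fin n → ℤ)) :
    coneOf D ⊆ Submodule.span ℝ ((fun a i => (a i : ℝ)) '' D) := by
  rintro _ ⟨c, hcD, -, rfl⟩
  exact Submodule.finsuppSum_mem _ _ _ _ fun a ha =>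
    Submodule.smul_mem _ _ (Submodule.subset_span ⟨a, hcD (Finsupp.mem_support_iff.2 ha), rfl⟩)

theorem AddMonoidHom.exists_linearMap_real (φ : (Fin n → ℤ) →+ ℤ) :
    ∃ Φ : (Fin n → ℝ) →ₗ[ℝ] ℝ, ∀ a, Φ (fun i => (a i : ℝ)) = φ a := by
  refine ⟨∑ i, (φ fun j => if i = j then 1 else 0 : ℝ) • LinearMap.proj i, fun a => ?_⟩
  have h := φ.toIntLinearMap.pi_apply_eq_sum_univ a
  simp only [AddMonoidHom.coe_toIntLinearMap] at h
  simp [h, mul_comm]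

theorem mem_of_mem_coneOf {H : AddSubgroup (Fin n → ℤ)} (hH : H.NSMulSaturated) {a : Fin n → ℤ}
    (ha : (fun i => (a i : ℝ)) ∈ coneOf (H : Set (Fin n → ℤ))) : a ∈ H := by
  by_contra haH
  obtain ⟨φ, hHφ, hφa⟩ := hH.exists_addMonoidHom_int haH
  obtain ⟨Φ, hΦ⟩ := φ.exists_linearMap_real
  have hspan : Submodule.span ℝ ((fun (x : Fin n → ℤ) i => (x i : ℝ)) '' H) ≤ LinearMap.ker Φ :=
    Submodule.span_le.2 <| by
      rintro _ ⟨x, hx, rfl⟩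
      simpa [hΦ] using hHφ hx
  have hΦa := hspan (coneOf_subset_span _ ha)
  rw [LinearMap.mem_ker, hΦ] at hΦa
  exact hφa (by exact_mod_cast hΦa)

theorem mem_coneOf_of_nsmul_mem {D : Set (Fin n → ℤ)} {k : ℕ} (hk : k ≠ 0) {c : Fin n → ℤ}
    (hc : k • c ∈ D) : (fun i => (c i : ℝ)) ∈ coneOf D := by
  refine ⟨Finsupp.single (k • c) (k : ℝ)⁻¹, ?_, fun a => ?_, ?_⟩
  · exact (Finset.coe_subset.2 Finsupp.support_single_subset).trans (by simpa using hc)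
  · rw [Finsupp.single_apply]; split_ifs <;> positivity
  · ext i
    simp [hk]

end Cone

namespace AddMonoidAlgebra

section Supported

variable (R : Type*) {G : Type*} [CommSemiring R]

/-- The monoid algebra `R[M]` of a submonoid `M ≤ G`, as a subalgebra of `R[G]`. -/
noncomputable def supportedSubalgebra [AddMonoid G] (M : AddSubmonoid G) : Subalgebra R R[G] :=
  (supported R R (M : Set G)).toSubalgebra
    (fun _ h => by simp [Finset.mem_zero.1 (support_coeff_one_subset h)])
    (fun x y hx hy d hd => by
      classical
      obtain ⟨a, ha, b, hb, rfl⟩ := Finset.mem_add.1 (support_coeff_mul_subset x y hd)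
      exact M.add_mem (hx ha) (hy hb))

variable {R}

theorem mem_supportedSubalgebra [AddMonoid G] {M : AddSubmonoid G} {x : R[G]} :
    x ∈ supportedSubalgebra R M ↔ ↑x.coeff.support ⊆ (M : Set G) :=
  Iff.rfl

theorem single_mem_supportedSubalgebra [AddMonoid G] {M : AddSubmonoid G} {g : G} {r : R}
    (hr : r ≠ 0) : single g r ∈ supportedSubalgebra R M ↔ g ∈ M := by
  simp [mem_supportedSubalgebra, coeff_single, Finsupp.support_single _ hr]

theorem support_single_sub_single {R : Type*} [Ring R] [AddMonoid G] {x y : G} (hxy : x ≠ y)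
    {r : R} (hr : r ≠ 0) : (↑(single x r - single y r).coeff.support : Set G) = {x, y} := by
  ext d
  by_cases hx : d = x <;> by_cases hy : d = y <;>
    simp_all [coeff_sub, coeff_single, eq_comm]

variable (R) in
theorem adjoin_of'_image [AddMonoid G] (D : Set G) :
    Algebra.adjoin R (of' R G '' D) = supportedSubalgebra R (AddSubmonoid.closure D) := by
  refine le_antisymm (Algebra.adjoin_le ?_) fun x hx => ?_
  · rintro _ ⟨d, hd, rfl⟩
    exact (Finset.coe_subset.2 Finsupp.support_single_subset).trans
      (by simpa using AddSubmonoid.subset_closure hd)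
  · have hx : x ∈ Submodule.span R ((fun m ↦ single m 1) '' (AddSubmonoid.closure D : Set G)) :=
      supported_eq_span_single R (AddSubmonoid.closure D : Set G) ▸ hx
    refine (Submodule.span_le
      (p := Subalgebra.toSubmodule (Algebra.adjoin R (of' R G '' D)))).2 ?_ hx
    rintro _ ⟨m, hm, rfl⟩
    induction hm using AddSubmonoid.closure_induction with
    | mem d hd => exact Algebra.subset_adjoin ⟨d, hd, rfl⟩
    | zero => simpa [one_def] using Subalgebra.one_mem (Algebra.adjoin R (of' R G '' D))
    | add a b _ _ ha hb => simpa [single_mul_single] using Subalgebra.mul_mem _ ha hb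

theorem isUnit_single_one [AddGroup G] (g : G) : IsUnit (single g (1 : R)) :=
  (Group.isUnit (Multiplicative.ofAdd g)).map (of R G)

end Supported

section Domain

variable {R G : Type*} [CommRing R] [IsDomain R]

theorem locSet_supportedSubalgebra [AddCommGroup G] [TwoUniqueSums G] (M : AddSubmonoid G) :
    locSet (supportedSubalgebra R M : Set R[G]) =
      supportedSubalgebra R (AddSubgroup.closure (M : Set G)).toAddSubmonoid := by
  classical
  ext f
  constructor
  · rintro ⟨s, hs, hsu, hsf⟩ d hd
    obtain ⟨e, r, hr, rfl⟩ := exists_eq_single_of_isUnit_s3 hsu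
    have hed : e + d ∈ M := hsf <| by
      simpa [coeff_single_mul_add] using mul_ne_zero hr (Finsupp.mem_support_iff.1 hd)
    simpa using sub_mem (AddSubgroup.subset_closure hed)
      (AddSubgroup.subset_closure ((single_mem_supportedSubalgebra hr).1 hs))
  · intro hf
    obtain ⟨e, he, hef⟩ := AddSubmonoid.exists_add_mem_of_subset_closure f.coeff.support hf
    refine ⟨single e 1, (single_mem_supportedSubalgebra one_ne_zero).2 he, isUnit_single_one e,
      fun d hd => ?_⟩
    obtain ⟨c, hc, rfl⟩ := Finset.mem_image.1 (support_coeff_single_mul_subset f 1 e hd)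
    exact hef c hc

variable [AddCommGroup G] [AddGroup.FG G] [IsAddTorsionFree G]

theorem nsmulSaturated_of_isQfc {M : AddSubmonoid G} (hM : IsQfc (supportedSubalgebra R M)) :
    (AddSubgroup.closure (M : Set G)).NSMulSaturated := by
  intro k c hkc
  refine or_iff_not_imp_left.2 fun hk => ?_
  rcases eq_or_ne c 0 with rfl | hc
  · exact zero_mem _
  obtain ⟨g, hg, hgc⟩ := AddSubmonoid.exists_add_mem_of_mem_closure hkc
  have hne : g + k • c ≠ g := by simp [hk, hc]
  have hab : (single c (1 : R) - 1) * (single g 1 * ∑ j ∈ Finset.range k, single c 1 ^ j) =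
      single (g + k • c) 1 - single g 1 := by
    rw [mul_left_comm, mul_comm (single c (1 : R) - 1), geom_sum_mul, single_pow, one_pow, mul_sub,
      single_mul_single, mul_one, mul_one]
  have habM : single (g + k • c) (1 : R) - single g 1 ∈ supportedSubalgebra R M := by
    rw [mem_supportedSubalgebra, support_single_sub_single hne one_ne_zero]
    exact Set.insert_subset hgc (Set.singleton_subset_iff.2 hg)
  have hab0 : single (g + k • c) (1 : R) - single g 1 ≠ 0 := fun h0 => by
    have hsupp := support_single_sub_single (R := R) hne one_ne_zero
    simp only [h0, coeff_zero, Finsupp.support_zero, Finset.coe_empty] at hsupp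
    exact (Set.insert_nonempty _ _).ne_empty hsupp.symm
  rw [← hab] at habM hab0
  obtain ⟨u, -, hu, -⟩ := hM _ _ (left_ne_zero_of_mul hab0) (right_ne_zero_of_mul hab0) habM
  obtain ⟨e, r, hr, hue⟩ := exists_eq_single_of_isUnit_s3 u.isUnit
  have hec : e + c ≠ e := by simpa using hc
  rw [hue, mul_sub, single_mul_single, mul_one, mul_one, mem_supportedSubalgebra,
    support_single_sub_single hec hr, Set.insert_subset_iff, Set.singleton_subset_iff] at hu
  simpa using sub_mem (AddSubgroup.subset_closure hu.1) (AddSubgroup.subset_closure hu.2)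

theorem exists_unit_mul_mem_of_mul_mem {M : AddSubmonoid G}
    (hM : (AddSubgroup.closure (M : Set G)).NSMulSaturated) {a b : R[G]} (ha : a ≠ 0) (hb : b ≠ 0)
    (hab : a * b ∈ supportedSubalgebra R M) : ∃ u : R[G]ˣ, ↑u * a ∈ supportedSubalgebra R M := by
  classical
  obtain ⟨c₀, hc₀⟩ := Finsupp.support_nonempty_iff.2 (coeff_eq_zero.not.2 ha)
  have hcoset : ∀ c ∈ a.coeff.support, c - c₀ ∈ AddSubgroup.closure (M : Set G) := by
    intro c hc
    by_contra hcH
    obtain ⟨φ, hφ, hφc⟩ := hM.exists_addMonoidHom_int hcH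
    have hφab : (φ '' ↑(a * b).coeff.support).Subsingleton := by
      refine (Set.subsingleton_singleton (a := (0 : ℤ))).anti ?_
      rintro _ ⟨d, hd, rfl⟩
      exact hφ (AddSubgroup.subset_closure (hab hd))
    have hφcc₀ := subsingleton_image_support_of_mul_left φ hb hφab (Set.mem_image_of_mem φ hc)
      (Set.mem_image_of_mem φ hc₀)
    exact hφc (by rw [map_sub, hφcc₀, sub_self])
  obtain ⟨e, he, hec⟩ := AddSubmonoid.exists_add_mem_of_subset_closure (M := M)
    (a.coeff.support.image (· - c₀)) (by simpa [Set.image_subset_iff, Set.subset_def] using hcoset)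
  refine ⟨(isUnit_single_one (e - c₀)).unit, fun d hd => ?_⟩
  obtain ⟨c, hc, rfl⟩ := Finset.mem_image.1 (support_coeff_single_mul_subset a 1 _ hd)
  simpa [sub_add_eq_add_sub, add_sub_assoc] using hec _ (Finset.mem_image_of_mem _ hc)

theorem isQfc_supportedSubalgebra_iff {M : AddSubmonoid G} :
    IsQfc (supportedSubalgebra R M) ↔ (AddSubgroup.closure (M : Set G)).NSMulSaturated := by
  refine ⟨nsmulSaturated_of_isQfc, fun hM a b ha hb hab => ?_⟩
  obtain ⟨u, hu⟩ := exists_unit_mul_mem_of_mul_mem hM ha hb hab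
  obtain ⟨v, hv⟩ := exists_unit_mul_mem_of_mul_mem hM hb ha (mul_comm a b ▸ hab)
  exact ⟨u, v, hu, hv⟩

end Domain

end AddMonoidAlgebra

section Gap

open AddMonoidAlgebra

variable {R : Type*} [CommRing R] [Nontrivial R] {n : ℕ}

theorem monSet_supportedSubalgebra (M : AddSubmonoid (Fin n → ℤ)) :
    monSet (supportedSubalgebra R M : Set (AddMonoidAlgebra R (Fin n → ℤ))) = M := by
  ext a
  exact single_mem_supportedSubalgebra one_ne_zero

theorem suppSet_supportedSubalgebra (M : AddSubmonoid (Fin n → ℤ)) :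
    suppSet (supportedSubalgebra R M : Set (AddMonoidAlgebra R (Fin n → ℤ))) = M := by
  ext a
  refine ⟨fun ⟨f, hf, ha⟩ => hf ha, fun ha => ⟨single a 1, ?_, ?_⟩⟩
  · exact (single_mem_supportedSubalgebra one_ne_zero).2 ha
  · simp [coeff_single]

theorem gapSet_supportedSubalgebra_eq_empty_iff (H : AddSubgroup (Fin n → ℤ)) :
    gapSet (supportedSubalgebra R H.toAddSubmonoid : Set (AddMonoidAlgebra R (Fin n → ℤ))) = ∅ ↔
      H.NSMulSaturated := by
  rw [gapSet, latticeCone, monSet_supportedSubalgebra, suppSet_supportedSubalgebra,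
    Set.sdiff_eq_empty]
  refine ⟨fun hH k c hkc => or_iff_not_imp_left.2 fun hk => hH (mem_coneOf_of_nsmul_mem hk hkc),
    fun hH a ha => mem_of_mem_coneOf hH ha⟩

end Gap

theorem isQfc_iff_gapSet_loc_empty_general (R : Type*) [CommRing R] [IsDomain R] (n : ℕ)
    (A : Subalgebra R (AddMonoidAlgebra R (Fin n → ℤ)))
    (hgen : ∃ D : Set (Fin n → ℤ),
      A = Algebra.adjoin R (AddMonoidAlgebra.of' R (Fin n → ℤ) '' D)) :
    IsQfc A ↔ gapSet (locSet (A : Set (AddMonoidAlgebra R (Fin n → ℤ)))) = ∅ := by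
  obtain ⟨D, rfl⟩ := hgen
  rw [AddMonoidAlgebra.adjoin_of'_image, AddMonoidAlgebra.locSet_supportedSubalgebra,
    gapSet_supportedSubalgebra_eq_empty_iff, AddMonoidAlgebra.isQfc_supportedSubalgebra_iff]

/-- For an `R`-subalgebra `A` of `B = R[x₁^{±1},…,xₙ^{±1}]` generated by monic monomials,
`A` is qfc in `B` iff `Gap(S⁻¹A) = ∅`, where `S = A ∩ B^×`. -/
theorem isQfc_iff_gapSet_loc_empty (R : Type*) [CommRing R] [IsDomain R] (n : ℕ) (hn : 1 ≤ n)
    (A : Subalgebra R (AddMonoidAlgebra R (Fin n → ℤ)))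
    (hgen : ∃ D : Set (Fin n → ℤ),
      A = Algebra.adjoin R (AddMonoidAlgebra.of' R (Fin n → ℤ) '' D)) :
    IsQfc A ↔ gapSet (locSet (A : Set (AddMonoidAlgebra R (Fin n → ℤ)))) = ∅ :=
  isQfc_iff_gapSet_loc_empty_general R n A hgen
end

section
/- Let R be a domain, n ≥ 1, and B = R[x₁^{±1},…,xₙ^{±1}] the Laurent polynomial ring in n variables over R. Let M be a submonoid of ℤⁿ and R[M] the R-subalgebra of B generated by the monomials x^a with a ∈ M. If R[M] is pre-factorially closed in B, then the monoid M is normal: for every positive integer m and every a in the subgroup ⟨M⟩ of ℤⁿ generated by M, if m·a ∈ M then a ∈ M. -/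
/-- An `R`-subalgebra `A` of `B` is pre-factorially closed (pfc) in `B`. -/
def IsPfc {R B : Type*} [CommSemiring R] [CommRing B] [Algebra R B] (A : Subalgebra R B) : Prop :=
  ∀ a b : B, a ≠ 0 → b ≠ 0 → a * b ∈ A →
    ∃ u : Bˣ, (u : B) * a ∈ A ∧ ((u⁻¹ : Bˣ) : B) * b ∈ A

/-!
Write `x = X^a`. The binomial `x^m - 1` lies in `R[M]` and factors as
`(x - 1) * (1 + x + ⋯ + x^(m-1))`. Since `ℤⁿ` has the two-unique-sums property, every unit of
`R[ℤⁿ]` is a monomial `r X^c`, so pre-factorial closedness gives `r X^c (x - 1) ∈ R[M]` and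
`r⁻¹ X^(-c) (1 + ⋯ + x^(m-1)) ∈ R[M]`. Reading off the monomials `X^(c+a)` and `X^(-c)` in
these, both exponents lie in `M`, hence so does their sum `a`.
-/

namespace AddMonoidAlgebra

variable {R G : Type*}

theorem support_coeff_subset_of_mem_adjoin [CommSemiring R] [AddMonoid G]
    {M : AddSubmonoid G} {f : R[G]} (hf : f ∈ Algebra.adjoin R (of' R G '' M)) :
    ↑f.coeff.support ⊆ (M : Set G) := by
  classical
  induction hf using Algebra.adjoin_induction with
  | mem x hx =>
    obtain ⟨a, ha, rfl⟩ := hx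
    exact (Finset.coe_subset.2 Finsupp.support_single_subset).trans (by simpa using ha)
  | algebraMap r =>
    exact (Finset.coe_subset.2 Finsupp.support_single_subset).trans (by simp)
  | add x y _ _ hx hy =>
    exact (Finset.coe_subset.2 Finsupp.support_add).trans (by simpa using ⟨hx, hy⟩)
  | mul x y _ _ hx hy =>
    intro s hs
    obtain ⟨a, ha, b, hb, rfl⟩ := Finset.mem_add.1 (support_coeff_mul_subset x y hs)
    exact M.add_mem (hx ha) (hy hb)

theorem add_mem_of_single_mul_mem_adjoin [CommSemiring R] [NoZeroDivisors R] [AddMonoid G]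
    [IsCancelAdd G] {M : AddSubmonoid G} {c b : G} {r : R} {p : R[G]} (hr : r ≠ 0)
    (hp : p.coeff b ≠ 0) (h : single c r * p ∈ Algebra.adjoin R (of' R G '' M)) : c + b ∈ M :=
  support_coeff_subset_of_mem_adjoin h <| by
    simpa [Finsupp.mem_support_iff, coeff_single_mul_add] using ⟨hr, hp⟩

theorem exists_eq_single_of_mul_eq_one [Semiring R] [NoZeroDivisors R] [Nontrivial R]
    [AddZeroClass G] [TwoUniqueSums G] {u v : R[G]} (h : u * v = 1) :
    ∃ c r, r ≠ 0 ∧ u = single c r := by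
  classical
  have add_eq_zero_of_uniqueAdd : ∀ {x y}, x ∈ u.coeff.support → y ∈ v.coeff.support →
      UniqueAdd u.coeff.support v.coeff.support x y → x + y = 0 := fun {x y} hx hy hxy => by
    have hne : (u * v).coeff (x + y) ≠ 0 := by
      rw [coeff_mul_add_of_uniqueAdd hxy]
      exact mul_ne_zero (Finsupp.mem_support_iff.1 hx) (Finsupp.mem_support_iff.1 hy)
    rw [h] at hne
    simpa using support_coeff_one_subset (Finsupp.mem_support_iff.2 hne)
  -- Two distinct uniquely realized sums would both equal `0`, contradicting uniqueness.
  have hcard : u.coeff.support.card * v.coeff.support.card ≤ 1 := by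
    by_contra! hlt
    obtain ⟨p, hp, q, hq, hpq, hup, huq⟩ := TwoUniqueSums.uniqueAdd_of_one_lt_card hlt
    rw [Finset.mem_product] at hp hq
    have := hup hq.1 hq.2 <| by
      rw [add_eq_zero_of_uniqueAdd hp.1 hp.2 hup, add_eq_zero_of_uniqueAdd hq.1 hq.2 huq]
    exact hpq (Prod.ext this.1 this.2).symm
  have hu : u ≠ 0 := left_ne_zero_of_mul_eq_one h
  have hv : v ≠ 0 := right_ne_zero_of_mul_eq_one h
  obtain ⟨c, hc⟩ : ∃ c, u.coeff.support = {c} := Finset.card_eq_one.1 <| by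
    have := Finset.card_pos.2 (Finsupp.support_nonempty_iff.2 (coeff_eq_zero.not.2 hu))
    have := Finset.card_pos.2 (Finsupp.support_nonempty_iff.2 (coeff_eq_zero.not.2 hv))
    nlinarith
  obtain ⟨hc0, hcu⟩ := Finsupp.support_eq_singleton.1 hc
  exact ⟨c, u.coeff c, hc0, coeff_injective (by rw [coeff_single]; exact hcu)⟩

theorem mem_of_nsmul_mem_of_isPfc [CommRing R] [IsDomain R] [AddCommGroup G] [TwoUniqueSums G]
    [IsAddTorsionFree G] {M : AddSubmonoid G} (hM : IsPfc (Algebra.adjoin R (of' R G '' M)))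
    {m : ℕ} (hm : m ≠ 0) {a : G} (ha : m • a ∈ M) : a ∈ M := by
  obtain rfl | ha0 := eq_or_ne a 0
  · exact M.zero_mem
  set x : R[G] := single a 1
  have hpow : ∀ k : ℕ, x ^ k = single (k • a) 1 := fun k => by simp [x, single_pow]
  set g := ∑ i ∈ Finset.range m, x ^ i
  have hfg : (x - 1) * g ∈ Algebra.adjoin R (of' R G '' M) := by
    rw [mul_comm, geom_sum_mul, hpow]
    exact sub_mem (Algebra.subset_adjoin ⟨_, ha, rfl⟩) (one_mem _)
  have hf : (x - 1).coeff a ≠ 0 := by simp [x, one_def, Ne.symm ha0]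
  have hg : g.coeff 0 ≠ 0 := by
    classical
    simp [g, hpow, coeff_sum, Finset.sum_apply', Finsupp.single_apply, nsmul_eq_zero_iff, ha0,
      Nat.pos_of_ne_zero hm]
  obtain ⟨U, hU, hU'⟩ := hM _ _ (fun h => hf (by simp [h])) (fun h => hg (by simp [h])) hfg
  obtain ⟨c, r, hr, hc⟩ := exists_eq_single_of_mul_eq_one U.mul_inv
  obtain ⟨d, s, hs, hd⟩ := exists_eq_single_of_mul_eq_one U.inv_mul
  have hcd : c + d = 0 := by
    have := U.mul_inv
    rw [hc, hd, single_mul_single, one_def] at this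
    have := congrArg coeff this
    simp only [coeff_single] at this
    rcases (Finsupp.single_eq_single_iff ..).1 this with ⟨hcd, -⟩ | ⟨hrs, -⟩
    exacts [hcd, absurd hrs (mul_ne_zero hr hs)]
  have hca : c + a ∈ M := add_mem_of_single_mul_mem_adjoin hr hf (hc ▸ hU)
  have hd0 : d + 0 ∈ M := add_mem_of_single_mul_mem_adjoin hs hg (hd ▸ hU')
  simpa [add_right_comm c a d, hcd] using M.add_mem hca hd0

end AddMonoidAlgebra

theorem monomialSubalgebra_isPfc_normal_general (R : Type*) [CommRing R] [IsDomain R]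
    (n : ℕ) (M : AddSubmonoid (Fin n → ℤ))
    (hpfc : IsPfc (monomialSubalgebra R M)) :
    ∀ (m : ℕ), 0 < m → ∀ a ∈ AddSubgroup.closure (M : Set (Fin n → ℤ)),
      m • a ∈ M → a ∈ M :=
  fun _ hm _ _ ha => AddMonoidAlgebra.mem_of_nsmul_mem_of_isPfc hpfc hm.ne' ha

/-- If `R[M]` is pfc in `B = R[x₁^{±1},…,xₙ^{±1}]`, then the monoid `M` is normal:
whenever `m • a ∈ M` for some positive integer `m` and `a ∈ ⟨M⟩`, then `a ∈ M`. -/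
theorem monomialSubalgebra_isPfc_normal (R : Type*) [CommRing R] [IsDomain R]
    (n : ℕ) (hn : 1 ≤ n) (M : AddSubmonoid (Fin n → ℤ))
    (hpfc : IsPfc (monomialSubalgebra R M)) :
    ∀ (m : ℕ), 0 < m → ∀ a ∈ AddSubgroup.closure (M : Set (Fin n → ℤ)),
      m • a ∈ M → a ∈ M :=
  monomialSubalgebra_isPfc_normal_general R n M hpfc
end

section
/- Let R be a domain and let A ⊆ B be R-algebras that are domains. Let S = A ∩ B^× and let S⁻¹A = {b ∈ B : s·b ∈ A for some s ∈ S}. Then A is quasi-factorially closed in B if and only if S⁻¹A is quasi-factorially closed in B. Moreover, in this case every R-subalgebra C with A ⊆ C ⊆ S⁻¹A is quasi-factorially closed in B. -/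
/-- A subset `A` of `B` is quasi-factorially closed (qfc) in `B` if for all nonzero
`a, b ∈ B` with `a * b ∈ A` there are units `u, v` of `B` with `u*a ∈ A`, `v*b ∈ A`. -/
def IsQfcSet {B : Type*} [CommRing B] (A : Set B) : Prop :=
  ∀ a b : B, a ≠ 0 → b ≠ 0 → a * b ∈ A →
    ∃ u v : Bˣ, (u : B) * a ∈ A ∧ (v : B) * b ∈ A

lemma subset_locSet {B : Type*} [CommRing B] {A : Set B} (h1 : (1 : B) ∈ A) :
    A ⊆ locSet A := fun b hb => ⟨1, h1, isUnit_one, by simpa⟩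

/-- If `u*a ∈ locSet A`, then `w*a ∈ A` for some unit `w`. -/
lemma exists_unit_of_mem_locSet {B : Type*} [CommRing B] {A : Set B} {a : B} {u : Bˣ}
    (h : (u : B) * a ∈ locSet A) : ∃ w : Bˣ, (w : B) * a ∈ A := by
  obtain ⟨s, _, hs, hsa⟩ := h
  exact ⟨hs.unit * u, by rw [Units.val_mul, IsUnit.unit_spec, mul_assoc]; exact hsa⟩

/-- `A` is qfc in `B` iff `S⁻¹A` is qfc in `B` (with `S = A ∩ B^×`); moreover, in that case
every `R`-subalgebra `C` with `A ≤ C ⊆ S⁻¹A` is qfc in `B`. -/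
theorem isQfc_iff_locSet_isQfc (R B : Type*) [CommRing R] [IsDomain R] [CommRing B]
    [IsDomain B] [Algebra R B] (A : Subalgebra R B) :
    (IsQfcSet (A : Set B) ↔ IsQfcSet (locSet (A : Set B))) ∧
    (IsQfcSet (A : Set B) →
      ∀ C : Subalgebra R B, A ≤ C → (C : Set B) ⊆ locSet (A : Set B) →
        IsQfcSet (C : Set B)) := by
  have hsub : (A : Set B) ⊆ locSet (A : Set B) := subset_locSet A.one_mem
  have fwd : IsQfcSet (A : Set B) → IsQfcSet (locSet (A : Set B)) := by
    intro hA a b ha hb hab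
    obtain ⟨s, hsA, hs, hsab⟩ := hab
    have hsa : s * a ≠ 0 := mul_ne_zero hs.ne_zero ha
    obtain ⟨u, v, hu, hv⟩ := hA (s * a) b hsa hb (by rwa [← mul_assoc] at hsab)
    refine ⟨u * hs.unit, v, ?_, hsub hv⟩
    have : ((u * hs.unit : Bˣ) : B) * a = (u : B) * (s * a) := by
      simp [mul_assoc]
    rw [this]; exact hsub hu
  refine ⟨⟨fwd, ?_⟩, ?_⟩
  · intro hL a b ha hb hab
    obtain ⟨u, v, hu, hv⟩ := hL a b ha hb (hsub hab)
    obtain ⟨w, hw⟩ := exists_unit_of_mem_locSet hu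
    obtain ⟨w', hw'⟩ := exists_unit_of_mem_locSet hv
    exact ⟨w, w', hw, hw'⟩
  · intro hA C hAC hCL a b ha hb hab
    obtain ⟨u, v, hu, hv⟩ := fwd hA a b ha hb (hCL hab)
    obtain ⟨s, hsA, hs, hsa⟩ := hu
    obtain ⟨t, htA, ht, htb⟩ := hv
    refine ⟨hs.unit * u, ht.unit * v, ?_, ?_⟩
    · rw [Units.val_mul, IsUnit.unit_spec, mul_assoc]; exact hAC hsa
    · rw [Units.val_mul, IsUnit.unit_spec, mul_assoc]; exact hAC htb
end

section
/- Let R be a domain, n ≥ 0, and B = R[x₁^{±1},…,xₙ^{±1}] the Laurent polynomial ring in n variables over R. Then the image of R in B (the bottom R-subalgebra) is pre-factorially closed in B: for all nonzero f, g ∈ B with f·g in the image of R, there exists a unit u of B such that u·f and u⁻¹·g lie in the image of R. -/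
/-- A subset `A` of `B` is pre-factorially closed (pfc) in `B` if for all nonzero
`a, b ∈ B` with `a * b ∈ A` there is a unit `u` of `B` with `u*a ∈ A` and `u⁻¹*b ∈ A`. -/
def IsPfcSet {B : Type*} [CommRing B] (A : Set B) : Prop :=
  ∀ a b : B, a ≠ 0 → b ≠ 0 → a * b ∈ A →
    ∃ u : Bˣ, (u : B) * a ∈ A ∧ ((u⁻¹ : Bˣ) : B) * b ∈ A

/-!
In a group algebra over a domain whose exponent group has two unique sums (such as `ℤⁿ`), a
product of nonzero elements is a monomial only if both factors are: otherwise there are two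
distinct pairs of exponents whose sums are attained uniquely, each contributing a nonzero
coefficient to the product, so both sums would equal the one exponent of the product. Hence if
`f * g = c` then `f = r xᵃ` and `g = s x⁻ᵃ`, and the unit `u = x⁻ᵃ` does the job.
-/

open Finset

namespace AddMonoidAlgebra

variable {R A : Type*}

theorem card_support_mul_card_support_le_one [Semiring R] [NoZeroDivisors R] [Add A]
    [TwoUniqueSums A] {f g : AddMonoidAlgebra R A} {c : A} (h : (f * g).coeff.support ⊆ {c}) :
    #f.coeff.support * #g.coeff.support ≤ 1 := by
  by_contra! hlt
  obtain ⟨p, hp, q, hq, hpq, hup, huq⟩ := TwoUniqueSums.uniqueAdd_of_one_lt_card hlt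
  have add_eq : ∀ p ∈ f.coeff.support ×ˢ g.coeff.support,
      UniqueAdd f.coeff.support g.coeff.support p.1 p.2 → p.1 + p.2 = c := by
    intro p hp hu
    rw [mem_product, Finsupp.mem_support_iff, Finsupp.mem_support_iff] at hp
    refine mem_singleton.mp (h ?_)
    rw [Finsupp.mem_support_iff, coeff_mul_add_of_uniqueAdd hu]
    exact mul_ne_zero hp.1 hp.2
  rw [mem_product] at hq
  have := hup hq.1 hq.2 ((add_eq q (mem_product.mpr hq) huq).trans (add_eq p hp hup).symm)
  exact hpq (Prod.ext this.1 this.2).symm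

theorem exists_eq_single_of_mul_eq_single [Semiring R] [NoZeroDivisors R] [Add A]
    [TwoUniqueSums A] {f g : AddMonoidAlgebra R A} (hf : f ≠ 0) (hg : g ≠ 0) {c : A} {r : R}
    (h : f * g = single c r) : (∃ a s, f = single a s) ∧ ∃ b t, g = single b t := by
  have : Nonempty A := ⟨c⟩
  have hcard := card_support_mul_card_support_le_one (c := c) <| by
    rw [h, coeff_single]
    exact Finsupp.support_single_subset
  have hf₀ : 0 < #f.coeff.support := card_pos.mpr (Finsupp.support_nonempty_iff.mpr (by simpa))
  have hg₀ : 0 < #g.coeff.support := card_pos.mpr (Finsupp.support_nonempty_iff.mpr (by simpa))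
  obtain ⟨a, s, hfs⟩ := Finsupp.card_support_le_one'.mp
    ((Nat.le_mul_of_pos_right _ hg₀).trans hcard)
  obtain ⟨b, t, hgt⟩ := Finsupp.card_support_le_one'.mp
    ((Nat.le_mul_of_pos_left _ hf₀).trans hcard)
  exact ⟨⟨a, s, coeff_injective hfs⟩, b, t, coeff_injective hgt⟩

theorem isPfcSet_range_algebraMap [CommRing R] [NoZeroDivisors R] [AddCommGroup A]
    [TwoUniqueSums A] : IsPfcSet (Set.range (algebraMap R (AddMonoidAlgebra R A))) := by
  rintro f g hf hg ⟨c, hc⟩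
  obtain ⟨⟨a, r, rfl⟩, b, s, rfl⟩ := exists_eq_single_of_mul_eq_single hf hg hc.symm
  have hab : a + b = 0 := by
    rw [single_mul_single, coe_algebraMap, Function.comp_apply, single_inj] at hc
    rcases hc with ⟨hab, -⟩ | ⟨-, hrs⟩
    · exact hab.symm
    · exact absurd hrs (mul_ne_zero (single_ne_zero.mp hf) (single_ne_zero.mp hg))
  refine ⟨⟨single (-a) 1, single a 1, by simp [one_def], by simp [one_def]⟩, ⟨r, ?_⟩, ⟨s, ?_⟩⟩
  · simp [coe_algebraMap]
  · simp [coe_algebraMap, hab]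

end AddMonoidAlgebra

/-- The image of `R` in the Laurent polynomial ring `B = R[x₁^{±1},…,xₙ^{±1}]` is pfc in `B`. -/
theorem range_algebraMap_isPfc (R : Type*) [CommRing R] [IsDomain R] (n : ℕ) :
    IsPfcSet (Set.range (algebraMap R (AddMonoidAlgebra R (Fin n → ℤ)))) :=
  AddMonoidAlgebra.isPfcSet_range_algebraMap
end

section
/- Let R be a domain, n ≥ 0, and B = R[x₁^{±1},…,xₙ^{±1}] the Laurent polynomial ring in n variables over R. For arbitrary subsets P, Q ⊆ {1,…,n} (possibly overlapping), the R-subalgebra A of B generated by {xᵢ : i ∈ P} ∪ {xᵢ⁻¹ : i ∈ Q} is pre-factorially closed in B. (This covers all subalgebras R[x₁^{δ₁},…,xₙ^{δₙ}] with δᵢ ∈ {−1, 0, 1, ±1}.) -/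
/-!
The subalgebra `A` consists of the Laurent polynomials whose exponents lie in the monoid
`S = ∏ᵢ Sᵢ`, where `Sᵢ ⊆ ℤ` contains positive integers only if `i ∈ P` and negative ones only
if `i ∈ Q`. Since `R` is a domain, the largest `i`-th exponent occurring in `a * b` is the sum of
the largest ones of `a` and `b` (the corresponding product of terms cannot cancel), and likewise
for the smallest. Hence `a * b ∈ A` puts the endpoints of `[lᵢ(a), uᵢ(a)] + [lᵢ(b), uᵢ(b)]` into
the interval `Sᵢ`, and one exponent shift `m`, that is the unit `x^m`, moves every exponent of
`a` into `S` by `+m` and every exponent of `b` into `S` by `-m`.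
-/

namespace AddMonoidAlgebra

theorem mem_adjoin_image_of'_iff {R M : Type*} [CommSemiring R] [AddMonoid M] {s : Set M}
    {f : R[M]} :
    f ∈ Algebra.adjoin R (of' R M '' s) ↔ ↑f.coeff.support ⊆ (AddSubmonoid.closure s : Set M) := by
  classical
  set S := AddSubmonoid.closure s
  have of'_mem {x : M} (hx : x ∈ S) : of' R M x ∈ supported R R (S : Set M) :=
    mem_supported.2 <| (Finset.coe_subset.2 Finsupp.support_single_subset).trans <| by
      simpa using hx
  let A : Subalgebra R R[M] := (supported R R (S : Set M)).toSubalgebra (of'_mem S.zero_mem)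
    fun f g hf hg => (Finset.coe_subset.2 (support_coeff_mul_subset f g)).trans <| by
      rw [Finset.coe_add]; exact AddSubmonoid.add_subset hf hg
  suffices Algebra.adjoin R (of' R M '' s) = A by rw [this]; exact .rfl
  refine le_antisymm (Algebra.adjoin_le ?_) fun f hf => ?_
  · rintro _ ⟨x, hx, rfl⟩
    exact of'_mem (AddSubmonoid.subset_closure hx)
  · replace hf : f ∈ supported R R (S : Set M) := hf
    rw [supported_eq_span_single] at hf
    refine (Subalgebra.mem_toSubmodule _).1 <| Submodule.span_le.2 ?_ hf
    rintro _ ⟨m, hm, rfl⟩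
    induction hm using AddSubmonoid.closure_induction with
    | mem x hx => exact Algebra.subset_adjoin ⟨x, hx, rfl⟩
    | zero => exact Subalgebra.one_mem _
    | add x y _ _ hx hy => simpa [single_mul_single] using Subalgebra.mul_mem _ hx hy

theorem coe_support_of'_mul_subset_iff {R G : Type*} [Semiring R] [AddGroup G] {m : G}
    {f : R[G]} {S : Set G} :
    ↑(of' R G m * f).coeff.support ⊆ S ↔ ∀ x ∈ f.coeff.support, m + x ∈ S := by
  rw [of'_apply, support_coeff_single_mul _ _ (by simp), Finset.coe_map, Set.image_subset_iff]
  rfl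

theorem isPfc_adjoin_image_of' {R G : Type*} [CommRing R] [AddCommGroup G] {s : Set G}
    (h : ∀ a b : R[G], a ≠ 0 → b ≠ 0 → ↑(a * b).coeff.support ⊆ (AddSubmonoid.closure s : Set G) →
      ∃ m, (∀ x ∈ a.coeff.support, m + x ∈ AddSubmonoid.closure s) ∧
        ∀ y ∈ b.coeff.support, -m + y ∈ AddSubmonoid.closure s) :
    IsPfc (Algebra.adjoin R (of' R G '' s)) := by
  intro a b ha hb hab
  simp only [mem_adjoin_image_of'_iff] at hab ⊢
  obtain ⟨m, ha', hb'⟩ := h a b ha hb hab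
  refine ⟨⟨of' R G m, of' R G (-m), by simp [single_mul_single, one_def],
    by simp [single_mul_single, one_def]⟩, ?_, ?_⟩
  exacts [coe_support_of'_mul_subset_iff.2 ha', coe_support_of'_mul_subset_iff.2 hb']

open Finset in
theorem exists_isMaxOn_add_mem_support_mul_s12 {R G H : Type*} [Semiring R] [NoZeroDivisors R]
    [AddZeroClass G] [UniqueSums G] [AddCommMonoid H] [LinearOrder H]
    [IsOrderedCancelAddMonoid H] (c : G →+ H) {a b : R[G]} (ha : a ≠ 0) (hb : b ≠ 0) :
    ∃ x ∈ a.coeff.support, ∃ y ∈ b.coeff.support, IsMaxOn c a.coeff.support x ∧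
      IsMaxOn c b.coeff.support y ∧ x + y ∈ (a * b).coeff.support := by
  classical
  obtain ⟨x₀, hx₀, hmax_a⟩ :=
    exists_max_image a.coeff.support c (by simpa [← coeff_eq_zero] using ha)
  obtain ⟨y₀, hy₀, hmax_b⟩ :=
    exists_max_image b.coeff.support c (by simpa [← coeff_eq_zero] using hb)
  obtain ⟨x, hx, y, hy, hxy⟩ := UniqueSums.uniqueAdd_of_nonempty
    (A := {x ∈ a.coeff.support | c x = c x₀}) (B := {y ∈ b.coeff.support | c y = c y₀})
    ⟨x₀, mem_filter.2 ⟨hx₀, rfl⟩⟩ ⟨y₀, mem_filter.2 ⟨hy₀, rfl⟩⟩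
  rw [mem_filter] at hx hy
  -- `c` is additive, so only a pair of `c`-maximal exponents can add up to `x + y`
  have huniq : UniqueAdd a.coeff.support b.coeff.support x y := by
    refine UniqueAdd.of_image_filter (c : G →ₙ+ H) hx.2 hy.2 (fun u v hu hv huv => ?_) hxy
    obtain ⟨x', hx', rfl⟩ := mem_image.1 hu
    obtain ⟨y', hy', rfl⟩ := mem_image.1 hv
    exact (add_eq_add_iff_eq_and_eq (hmax_a x' hx') (hmax_b y' hy')).1 huv
  refine ⟨x, hx.1, y, hy.1, fun z hz => hx.2 ▸ hmax_a z hz, fun z hz => hy.2 ▸ hmax_b z hz, ?_⟩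
  rw [Finsupp.mem_support_iff, coeff_mul_add_of_uniqueAdd huniq]
  exact mul_ne_zero (Finsupp.mem_support_iff.1 hx.1) (Finsupp.mem_support_iff.1 hy.1)

theorem exists_isMinOn_add_mem_support_mul {R G H : Type*} [Semiring R] [NoZeroDivisors R]
    [AddZeroClass G] [UniqueSums G] [AddCommGroup H] [LinearOrder H]
    [IsOrderedAddMonoid H] (c : G →+ H) {a b : R[G]} (ha : a ≠ 0) (hb : b ≠ 0) :
    ∃ x ∈ a.coeff.support, ∃ y ∈ b.coeff.support, IsMinOn c a.coeff.support x ∧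
      IsMinOn c b.coeff.support y ∧ x + y ∈ (a * b).coeff.support := by
  obtain ⟨x, hx, y, hy, hx_max, hy_max, hxy⟩ := exists_isMaxOn_add_mem_support_mul_s12 (-c) ha hb
  exact ⟨x, hx, y, hy, by simpa using hx_max.neg, by simpa using hy_max.neg, hxy⟩

end AddMonoidAlgebra

def signSubmonoid (p q : Prop) : AddSubmonoid ℤ where
  carrier := {x | (0 < x → p) ∧ (x < 0 → q)}
  zero_mem' := by simp
  add_mem' {x y} hx hy :=
    ⟨fun _ => (lt_or_ge 0 x).elim hx.1 fun _ => hy.1 (by omega),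
      fun _ => (lt_or_ge x 0).elim hx.2 fun _ => hy.2 (by omega)⟩

namespace signSubmonoid

variable {p q : Prop}

theorem mem_of_le_of_le {x y z : ℤ} (hx : x ∈ signSubmonoid p q) (hz : z ∈ signSubmonoid p q)
    (hxy : x ≤ y) (hyz : y ≤ z) : y ∈ signSubmonoid p q :=
  ⟨fun _ => hz.1 (by omega), fun _ => hx.2 (by omega)⟩

theorem exists_shift {la ua lb ub : ℤ} (ha : la ≤ ua) (hb : lb ≤ ub)
    (hl : la + lb ∈ signSubmonoid p q) (hu : ua + ub ∈ signSubmonoid p q) :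
    ∃ m, (∀ x, la ≤ x → x ≤ ua → m + x ∈ signSubmonoid p q) ∧
      ∀ y, lb ≤ y → y ≤ ub → -m + y ∈ signSubmonoid p q := by
  -- shift `[la, ua]` to end at `0` if negatives are allowed, to start at `0` otherwise
  by_cases hq : q
  · refine ⟨-ua, fun x _ _ => ⟨fun _ => ?_, fun _ => hq⟩, fun y _ _ => ?_⟩
    · omega
    · exact mem_of_le_of_le hl hu (by omega) (by omega)
  · have : 0 ≤ la + lb := by by_contra! h; exact hq (hl.2 h)
    refine ⟨-la, fun x _ _ => ?_, fun y _ _ => ?_⟩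
    · exact mem_of_le_of_le (signSubmonoid p q).zero_mem hu (by omega) (by omega)
    · exact mem_of_le_of_le hl hu (by omega) (by omega)

end signSubmonoid

def signedOrthant {ι : Type*} (P Q : Set ι) : AddSubmonoid (ι → ℤ) :=
  .pi .univ fun i => signSubmonoid (i ∈ P) (i ∈ Q)

namespace signedOrthant

variable {ι : Type*} {P Q : Set ι}

theorem eq_closure [Fintype ι] [DecidableEq ι] :
    signedOrthant P Q = AddSubmonoid.closure
      ((fun i => Pi.single i (1 : ℤ)) '' P ∪ (fun i => -Pi.single i (1 : ℤ)) '' Q) := by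
  refine le_antisymm (fun v hv => ?_) (AddSubmonoid.closure_le.2 ?_)
  · rw [← Finset.univ_sum_single v]
    refine sum_mem fun i _ => ?_
    have hvi := hv i trivial
    obtain h0 | hk0 := eq_or_ne (v i) 0
    · rw [h0, Pi.single_zero]; exact zero_mem _
    obtain ⟨k, hk | hk⟩ := Int.eq_nat_or_neg (v i)
    · have hP : i ∈ P := hvi.1 (by omega)
      rw [hk, show (Pi.single i (k : ℤ) : ι → ℤ) = k • Pi.single i 1 by
        simp [← Pi.single_smul]]
      exact nsmul_mem (AddSubmonoid.subset_closure (.inl ⟨i, hP, rfl⟩)) k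
    · have hQ : i ∈ Q := hvi.2 (by omega)
      rw [hk, show (Pi.single i (-k : ℤ) : ι → ℤ) = k • -Pi.single i 1 by
        simp [← Pi.single_smul, Pi.single_neg]]
      exact nsmul_mem (AddSubmonoid.subset_closure (.inr ⟨i, hQ, rfl⟩)) k
  · rintro _ (⟨i, hi, rfl⟩ | ⟨i, hi, rfl⟩) j -
    all_goals
      rcases eq_or_ne j i with rfl | hj
      · simp [signSubmonoid, hi]
      · simp [hj, (signSubmonoid _ _).zero_mem]

theorem exists_shift {X Y : Set (ι → ℤ)}
    (hmax : ∀ i, ∃ x ∈ X, ∃ y ∈ Y, IsMaxOn (· i) X x ∧ IsMaxOn (· i) Y y ∧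
      x i + y i ∈ signSubmonoid (i ∈ P) (i ∈ Q))
    (hmin : ∀ i, ∃ x ∈ X, ∃ y ∈ Y, IsMinOn (· i) X x ∧ IsMinOn (· i) Y y ∧
      x i + y i ∈ signSubmonoid (i ∈ P) (i ∈ Q)) :
    ∃ m, (∀ x ∈ X, m + x ∈ signedOrthant P Q) ∧ ∀ y ∈ Y, -m + y ∈ signedOrthant P Q := by
  choose xu hxu yu hyu hxu_max hyu_max hu using hmax
  choose xl hxl yl hyl hxl_min hyl_min hl using hmin
  choose m hmX hmY using fun i =>
    signSubmonoid.exists_shift (hxl_min i (hxu i)) (hyl_min i (hyu i)) (hl i) (hu i)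
  exact ⟨m, fun x hx i _ => hmX i _ (hxl_min i hx) (hxu_max i hx),
    fun y hy i _ => hmY i _ (hyl_min i hy) (hyu_max i hy)⟩

end signedOrthant

/-- For arbitrary subsets `P, Q ⊆ {1,…,n}`, the `R`-subalgebra of the Laurent polynomial
ring `B = R[x₁^{±1},…,xₙ^{±1}]` generated by `{xᵢ : i ∈ P} ∪ {xᵢ⁻¹ : i ∈ Q}` is pfc in `B`. -/
theorem adjoin_vars_isPfc (R : Type*) [CommRing R] [IsDomain R] (n : ℕ)
    (P Q : Set (Fin n)) :
    IsPfc (Algebra.adjoin R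
      ((fun i => AddMonoidAlgebra.of' R (Fin n → ℤ) (Pi.single i (1 : ℤ))) '' P ∪
       (fun i => AddMonoidAlgebra.of' R (Fin n → ℤ) (-Pi.single i (1 : ℤ))) '' Q)) := by
  rw [← Set.image_image (AddMonoidAlgebra.of' R _),
    ← Set.image_image (AddMonoidAlgebra.of' R _) (fun i => -Pi.single i _), ← Set.image_union]
  refine AddMonoidAlgebra.isPfc_adjoin_image_of' fun a b ha hb hab => ?_
  rw [← signedOrthant.eq_closure] at hab ⊢
  refine signedOrthant.exists_shift (fun i => ?_) (fun i => ?_)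
  · obtain ⟨x, hx, y, hy, hx_max, hy_max, hxy⟩ :=
      AddMonoidAlgebra.exists_isMaxOn_add_mem_support_mul_s12 (Pi.evalAddMonoidHom _ i) ha hb
    exact ⟨x, hx, y, hy, hx_max, hy_max, hab hxy i trivial⟩
  · obtain ⟨x, hx, y, hy, hx_min, hy_min, hxy⟩ :=
      AddMonoidAlgebra.exists_isMinOn_add_mem_support_mul (Pi.evalAddMonoidHom _ i) ha hb
    exact ⟨x, hx, y, hy, hx_min, hy_min, hab hxy i trivial⟩
end

section
/- Let R be a domain and let A ⊆ B ⊆ C be R-algebras that are domains. If A is quasi-factorially closed in B and B is pre-factorially closed in C, then A is quasi-factorially closed in C. -/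
/-- `A` is quasi-factorially closed in the subring (with underlying set) `U` of `C`:
for all nonzero `a, b ∈ U` with `a * b ∈ A` there are units `u, v` of `U` (i.e. elements of
`U` invertible within `U`) such that `u*a ∈ A` and `v*b ∈ A`. -/
def QfcIn {C : Type*} [CommRing C] (U A : Set C) : Prop :=
  ∀ a b : C, a ∈ U → b ∈ U → a ≠ 0 → b ≠ 0 → a * b ∈ A →
    ∃ u v w z : C, u ∈ U ∧ v ∈ U ∧ w ∈ U ∧ z ∈ U ∧ u * w = 1 ∧ v * z = 1 ∧
      u * a ∈ A ∧ v * b ∈ A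

/-- `B` is pre-factorially closed in the subring (with underlying set) `U` of `C`:
for all nonzero `a, b ∈ U` with `a * b ∈ B` there is a unit `u` of `U` (with inverse `w` in
`U`) such that `u*a ∈ B` and `u⁻¹*b ∈ B`. -/
def PfcIn {C : Type*} [CommRing C] (U B : Set C) : Prop :=
  ∀ a b : C, a ∈ U → b ∈ U → a ≠ 0 → b ≠ 0 → a * b ∈ B →
    ∃ u w : C, u ∈ U ∧ w ∈ U ∧ u * w = 1 ∧ u * a ∈ B ∧ w * b ∈ B

/-- If `A ⊆ B ⊆ C` are `R`-algebras (domains), `A` is qfc in `B` and `B` is pfc in `C`,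
then `A` is qfc in `C`. -/
theorem qfc_of_qfc_of_pfc (R C : Type*) [CommRing R] [IsDomain R] [CommRing C] [IsDomain C]
    [Algebra R C] (A B : Subalgebra R C) (hAB : A ≤ B)
    (h1 : QfcIn (B : Set C) (A : Set C))
    (h2 : PfcIn (Set.univ : Set C) (B : Set C)) :
    QfcIn (Set.univ : Set C) (A : Set C) := by
  intro a b _ _ ha hb hab
  obtain ⟨u, w, -, -, huw, hua, hwb⟩ :=
    h2 a b trivial trivial ha hb (hAB hab)
  have hu : u ≠ 0 := fun h => by simp [h] at huw
  have hw : w ≠ 0 := fun h => by simp [h] at huw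
  have hmem : (u * a) * (w * b) ∈ (A : Set C) := by
    have : (u * a) * (w * b) = (u * w) * (a * b) := by ring
    rw [this, huw, one_mul]; exact hab
  obtain ⟨u', v', w', z', hu', hv', hw', hz', huw', hvz', hA1, hA2⟩ :=
    h1 (u * a) (w * b) hua hwb (mul_ne_zero hu ha) (mul_ne_zero hw hb) hmem
  refine ⟨u' * u, v' * w, w' * w, z' * u, trivial, trivial, trivial, trivial, ?_, ?_, ?_, ?_⟩
  · calc u' * u * (w' * w) = (u' * w') * (u * w) := by ring
      _ = 1 := by rw [huw', huw, one_mul]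
  · calc v' * w * (z' * u) = (v' * z') * (u * w) := by ring
      _ = 1 := by rw [hvz', huw, one_mul]
  · have : u' * u * a = u' * (u * a) := by ring
    rw [this]; exact hA1
  · have : v' * w * b = v' * (w * b) := by ring
    rw [this]; exact hA2
end

section
/- Let R be a domain, n ≥ 1, B = R[x₁^{±1},…,xₙ^{±1}] the Laurent polynomial ring in n variables over R, and A an R-subalgebra of B. Suppose there exists w ∈ ℤⁿ such that the monomial x^w belongs to A and the monomials x^{w+eᵢ} belong to A for all i = 1,…,n, where eᵢ denotes the i-th standard basis vector of ℤⁿ. Then A is quasi-factorially closed in B. -/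
open AddMonoidAlgebra

theorem AddMonoidAlgebra.isUnit_of' (R : Type*) {G : Type*} [CommSemiring R] [AddGroup G]
    (c : G) : IsUnit (of' R G c) := by
  rw [of'_eq_of]
  exact (Group.isUnit _).map _

namespace Subalgebra

variable {R G : Type*} [CommSemiring R] [AddMonoid G]

def monomialExponents (A : Subalgebra R (AddMonoidAlgebra R G)) : AddSubmonoid G where
  carrier := {v | of' R G v ∈ A}
  zero_mem' := by simpa only [Set.mem_ofPred_eq, of'_eq_of, ofAdd_zero, map_one] using A.one_mem
  add_mem' {v v'} hv hv' := by
    simpa only [Set.mem_ofPred_eq, of'_eq_of, ofAdd_add, map_mul] using A.mul_mem hv hv'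

theorem of'_mul_mem_of_forall_add_mem {A : Subalgebra R (AddMonoidAlgebra R G)}
    {a : AddMonoidAlgebra R G} {c : G} (h : ∀ α ∈ a.coeff.support, c + α ∈ A.monomialExponents) :
    of' R G c * a ∈ A := by
  rw [← sum_coeff_single a, Finsupp.sum, Finset.mul_sum]
  refine A.sum_mem fun α hα => ?_
  rw [of'_apply, single_mul_single, one_mul, ← mul_one (a.coeff α), ← smul_eq_mul, ← smul_single]
  exact A.smul_mem (h α hα) _

end Subalgebra

section Exponents

variable {ι : Type*} [Fintype ι] [DecidableEq ι] {S : AddSubmonoid (ι → ℤ)} {w : ι → ℤ}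

theorem nsmul_add_mem_of_sum_le (hw : w ∈ S) (hwi : ∀ i, w + Pi.single i 1 ∈ S)
    {N : ℕ} {m : ι → ℕ} (hm : ∑ i, m i ≤ N) :
    N • w + (fun i => (m i : ℤ)) ∈ S := by
  have hdecomp : N • w + (fun i => (m i : ℤ)) =
      (N - ∑ i, m i) • w + ∑ i, m i • (w + Pi.single i 1) := by
    ext j
    simp only [nsmul_eq_mul, Pi.add_apply, Pi.mul_apply, Pi.natCast_apply, Nat.cast_sub hm,
      Nat.cast_sum, smul_add, Finset.sum_add_distrib, ← Finset.sum_mul, Pi.sub_apply,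
      Finset.sum_apply, Pi.single_apply, mul_ite, mul_one, mul_zero, Finset.sum_ite_eq,
      Finset.mem_univ, ↓reduceIte]
    ring
  rw [hdecomp]
  exact S.add_mem (S.nsmul_mem hw _) (S.sum_mem fun i _ => S.nsmul_mem (hwi i) _)

theorem exists_add_mem_of_finset (hw : w ∈ S) (hwi : ∀ i, w + Pi.single i 1 ∈ S)
    (F : Finset (ι → ℤ)) : ∃ c, ∀ α ∈ F, c + α ∈ S := by
  obtain ⟨t, ht⟩ := F.bddBelow
  set N := ∑ α ∈ F, ∑ i, (α i - t i).toNat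
  refine ⟨N • w - t, fun α hα => ?_⟩
  have hα' : N • w - t + α = N • w + fun i => ((α i - t i).toNat : ℤ) := by
    ext i
    have hti : t i ≤ α i := ht hα i
    simp only [nsmul_eq_mul, Pi.add_apply, Pi.sub_apply, Pi.mul_apply, Pi.natCast_apply,
      Int.ofNat_toNat]
    omega
  rw [hα']
  exact nsmul_add_mem_of_sum_le hw hwi
    (Finset.single_le_sum (f := fun α => ∑ i, (α i - t i).toNat) (fun _ _ => Nat.zero_le _) hα)

end Exponents

theorem Subalgebra.exists_unit_mul_mem_of_monomials {R ι : Type*} [CommSemiring R] [Fintype ι]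
    [DecidableEq ι] {A : Subalgebra R (AddMonoidAlgebra R (ι → ℤ))} {w : ι → ℤ}
    (hw : of' R (ι → ℤ) w ∈ A) (hwi : ∀ i, of' R (ι → ℤ) (w + Pi.single i 1) ∈ A)
    (a : AddMonoidAlgebra R (ι → ℤ)) :
    ∃ u : (AddMonoidAlgebra R (ι → ℤ))ˣ, (u : AddMonoidAlgebra R (ι → ℤ)) * a ∈ A := by
  obtain ⟨c, hc⟩ := exists_add_mem_of_finset (S := A.monomialExponents) hw hwi a.coeff.support
  exact ⟨(isUnit_of' R c).unit, of'_mul_mem_of_forall_add_mem hc⟩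

theorem isQfc_of_monomials_general (R : Type*) [CommRing R] (n : ℕ)
    (A : Subalgebra R (AddMonoidAlgebra R (Fin n → ℤ)))
    (w : Fin n → ℤ)
    (hw : AddMonoidAlgebra.of' R (Fin n → ℤ) w ∈ A)
    (hwi : ∀ i : Fin n, AddMonoidAlgebra.of' R (Fin n → ℤ) (w + Pi.single i (1 : ℤ)) ∈ A) :
    IsQfc A := by
  intro a b _ _ _
  obtain ⟨u, hu⟩ := A.exists_unit_mul_mem_of_monomials hw hwi a
  obtain ⟨v, hv⟩ := A.exists_unit_mul_mem_of_monomials hw hwi b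
  exact ⟨u, v, hu, hv⟩

/-- If there is `w ∈ ℤⁿ` such that the monomials `x^w` and `x^{w+eᵢ}` (for all `i`) belong
to `A`, then `A` is qfc in `B = R[x₁^{±1},…,xₙ^{±1}]`. -/
theorem isQfc_of_monomials (R : Type*) [CommRing R] [IsDomain R] (n : ℕ) (hn : 1 ≤ n)
    (A : Subalgebra R (AddMonoidAlgebra R (Fin n → ℤ)))
    (w : Fin n → ℤ)
    (hw : AddMonoidAlgebra.of' R (Fin n → ℤ) w ∈ A)
    (hwi : ∀ i : Fin n, AddMonoidAlgebra.of' R (Fin n → ℤ) (w + Pi.single i (1 : ℤ)) ∈ A) :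
    IsQfc A :=
  isQfc_of_monomials_general R n A w hw hwi
end

section
/- Let M be a submonoid of the additive group ℤ. If M contains both a positive integer and a negative integer, then M = dℤ for some integer d; in particular, M is a subgroup of ℤ. -/
/-- A submonoid of `ℤ` containing both a positive and a negative integer equals `dℤ` for
some `d`; in particular it is a subgroup of `ℤ`. -/
theorem addSubmonoid_int_eq_zmultiples (M : AddSubmonoid ℤ)
    (hpos : ∃ a ∈ M, 0 < a) (hneg : ∃ b ∈ M, b < 0) :
    ∃ d : ℤ, (M : Set ℤ) = (AddSubgroup.zmultiples d : Set ℤ) := by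
  obtain ⟨a, ha, hapos⟩ := hpos
  obtain ⟨b, hb, hbneg⟩ := hneg
  set t : ℤ := (-b) * a with htdef
  have htpos : 0 < t := mul_pos (by linarith) hapos
  have ht : t ∈ M := by
    have := M.nsmul_mem ha (-b).toNat
    rwa [nsmul_eq_mul, Int.toNat_of_nonneg (by linarith)] at this
  have hnt : -t ∈ M := by
    have := M.nsmul_mem hb a.toNat
    rwa [nsmul_eq_mul, Int.toNat_of_nonneg (le_of_lt hapos),
      show a * b = -((-b) * a) by ring] at this
  have hneg' : ∀ x ∈ M, -x ∈ M := by
    intro x hx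
    rcases le_or_gt 0 x with hx0 | hx0
    · have h1 : (t - 1).toNat • x ∈ M := M.nsmul_mem hx _
      have h2 : x.toNat • (-t) ∈ M := M.nsmul_mem hnt _
      have := M.add_mem h1 h2
      rwa [nsmul_eq_mul, nsmul_eq_mul, Int.toNat_of_nonneg (by linarith),
        Int.toNat_of_nonneg hx0, show (t - 1) * x + x * (-t) = -x by ring] at this
    · have h1 : (-x).toNat • t ∈ M := M.nsmul_mem ht _
      have h2 : (t - 1).toNat • x ∈ M := M.nsmul_mem hx _
      have := M.add_mem h1 h2
      rwa [nsmul_eq_mul, nsmul_eq_mul, Int.toNat_of_nonneg (by linarith),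
        Int.toNat_of_nonneg (by linarith),
        show (-x) * t + (t - 1) * x = -x by ring] at this
  let H : AddSubgroup ℤ :=
    { M with neg_mem' := fun {x} hx => hneg' x hx }
  obtain ⟨d, hd⟩ := Int.subgroup_cyclic H
  refine ⟨d, ?_⟩
  have : (M : Set ℤ) = (H : Set ℤ) := rfl
  rw [this, hd, ← AddSubgroup.zmultiples_eq_closure]
end

section
/- Let A ⊆ B be domains with B a unique factorization domain. If A is factorially closed in B, then A is a unique factorization domain. -/
/-- If a prime of `B` lies in `A` (factorially closed), it is prime in `A`. -/
lemma fc_prime_lift {B : Type*} [CommRing B] [IsDomain B] (A : Subring B)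
    (hfc : ∀ a b : B, a ≠ 0 → b ≠ 0 → a * b ∈ A → a ∈ A ∧ b ∈ A)
    (p : A) (hp : Prime (p : B)) : Prime p := by
  have hdvd : ∀ x : A, (p : B) ∣ (x : B) → p ∣ x := by
    intro x h
    rcases eq_or_ne x 0 with rfl | hx0
    · exact dvd_zero p
    obtain ⟨c, hc⟩ := h
    have hc0 : c ≠ 0 := by
      rintro rfl
      rw [mul_zero] at hc
      exact hx0 (by exact_mod_cast hc)
    have hmem : c ∈ A := (hfc _ _ hp.ne_zero hc0 (hc ▸ x.2)).2
    exact ⟨⟨c, hmem⟩, Subtype.ext hc⟩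
  refine ⟨fun h => hp.ne_zero (by exact_mod_cast congrArg Subtype.val h),
    fun h => hp.not_unit (h.map A.subtype), fun x y hxy => ?_⟩
  have : (p : B) ∣ (x : B) * (y : B) := by
    obtain ⟨c, hc⟩ := hxy
    exact ⟨c, by exact_mod_cast congrArg Subtype.val hc⟩
  rcases hp.2.2 _ _ this with h | h
  · exact Or.inl (hdvd x h)
  · exact Or.inr (hdvd y h)

lemma fc_prod_mem {B : Type*} [CommRing B] [IsDomain B] (A : Subring B)
    (hfc : ∀ a b : B, a ≠ 0 → b ≠ 0 → a * b ∈ A → a ∈ A ∧ b ∈ A) :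
    ∀ (s : Multiset B), (∀ b ∈ s, b ≠ 0) → s.prod ∈ A → ∀ b ∈ s, b ∈ A := by
  intro s
  induction s using Multiset.induction with
  | empty => intro _ _ b hb; simp at hb
  | cons a s ih =>
    intro hne hprod b hb
    rw [Multiset.prod_cons] at hprod
    have ha0 : a ≠ 0 := hne a (Multiset.mem_cons_self a s)
    have hs0 : s.prod ≠ 0 := by
      refine Multiset.prod_ne_zero ?_
      intro h
      exact hne 0 (Multiset.mem_cons_of_mem h) rfl
    obtain ⟨haA, hsA⟩ := hfc _ _ ha0 hs0 hprod
    rcases Multiset.mem_cons.1 hb with rfl | hb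
    · exact haA
    · exact ih (fun c hc => hne c (Multiset.mem_cons_of_mem hc)) hsA b hb

/-- If `B` is a UFD and the subring `A` is factorially closed in `B` (for nonzero `a, b ∈ B`,
`a * b ∈ A` implies `a ∈ A` and `b ∈ A`), then `A` is a UFD. -/
theorem fc_subring_of_ufd_isUfd (B : Type*) [CommRing B] [IsDomain B]
    [UniqueFactorizationMonoid B] (A : Subring B)
    (hfc : ∀ a b : B, a ≠ 0 → b ≠ 0 → a * b ∈ A → a ∈ A ∧ b ∈ A) :
    UniqueFactorizationMonoid ↥A := by
  refine UniqueFactorizationMonoid.of_exists_prime_factors ?_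
  intro a ha
  have haB : (a : B) ≠ 0 := fun h => ha (Subtype.ext h)
  obtain ⟨u, hu⟩ := (UniqueFactorizationMonoid.factors_prod haB)
  set s := UniqueFactorizationMonoid.factors (a : B) with hs
  have hprime : ∀ b ∈ s, Prime b := fun b hb =>
    UniqueFactorizationMonoid.prime_of_factor b hb
  have hne : ∀ b ∈ s, b ≠ 0 := fun b hb => (hprime b hb).ne_zero
  have hsprod0 : s.prod ≠ 0 := Multiset.prod_ne_zero (fun h => hne 0 h rfl)
  have hu0 : (u : B) ≠ 0 := u.ne_zero
  have hmemA : s.prod * (u : B) ∈ A := hu ▸ a.2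
  obtain ⟨hprodA, huA⟩ := hfc _ _ hsprod0 hu0 hmemA
  have huiA : ((u⁻¹ : Bˣ) : B) ∈ A := by
    have h1 : (u : B) * ((u⁻¹ : Bˣ) : B) ∈ A := by
      rw [Units.mul_inv]; exact A.one_mem
    exact (hfc _ _ hu0 u⁻¹.ne_zero h1).2
  have hmem : ∀ b ∈ s, b ∈ A := fc_prod_mem A hfc s hne hprodA
  refine ⟨s.pmap (fun b hb => (⟨b, hb⟩ : A)) hmem, ?_, ?_⟩
  · intro b hb
    obtain ⟨c, hc, rfl⟩ := Multiset.mem_pmap.1 hb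
    exact fc_prime_lift A hfc _ (hprime c hc)
  · refine ⟨⟨⟨u, huA⟩, ⟨(u⁻¹ : Bˣ), huiA⟩, ?_, ?_⟩, ?_⟩
    · exact Subtype.ext (u.mul_inv)
    · exact Subtype.ext (u.inv_mul)
    · apply Subtype.ext
      push_cast
      rw [Multiset.map_pmap]
      simpa [Multiset.pmap_eq_map] using hu
end
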